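/- arXiv:math/0606331 — 15 statements merged into one kernel-verified Lean document; each statement's English description precedes it below -/
import Mathlib

section
/- Let (A, μ, η, Δ, ε) be a symmetric Frobenius algebra over a field k whose window element a := μ(Δ(1)) is invertible, with two-sided inverse a'. Then the k-linear map p : A → A defined by p := L_{a'} ∘ μ ∘ τ_{A,A} ∘ Δ (where τ_{A,A} : A ⊗ A → A ⊗ A is the swap x ⊗ y ↦ y ⊗ x and L_{a'} is left multiplication by a') is an idempotent, p ∘ p = p, and its range equals the centre of A: range p = Z(A). -/
open TensorProduct

set_option maxHeartbeats 1000000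
set_option synthInstance.maxHeartbeats 1000000

/-- A Frobenius algebra structure on a `k`-algebra `A`: a comultiplication `Δ` and a counit `ε`
making `A` a coassociative counital coalgebra satisfying the Frobenius relation. -/
structure FrobeniusStr (k A : Type*) [Field k] [Ring A] [Algebra k A] where
  Δ : A →ₗ[k] A ⊗[k] A
  ε : A →ₗ[k] k
  coassoc : ∀ u : A,
    (TensorProduct.assoc k A A A) ((TensorProduct.map Δ LinearMap.id) (Δ u)) =
      (TensorProduct.map LinearMap.id Δ) (Δ u)
  counit_left : ∀ u : A,
    (TensorProduct.lid k A) ((TensorProduct.map ε LinearMap.id) (Δ u)) = u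
  counit_right : ∀ u : A,
    (TensorProduct.rid k A) ((TensorProduct.map LinearMap.id ε) (Δ u)) = u
  frob_left : ∀ u v : A,
    (TensorProduct.map (LinearMap.mul' k A) LinearMap.id)
        ((TensorProduct.assoc k A A A).symm ((TensorProduct.map LinearMap.id Δ) (u ⊗ₜ v))) =
      Δ (u * v)
  frob_right : ∀ u v : A,
    (TensorProduct.map LinearMap.id (LinearMap.mul' k A))
        ((TensorProduct.assoc k A A A) ((TensorProduct.map Δ LinearMap.id) (u ⊗ₜ v))) =
      Δ (u * v)

/-- The window element `a = μ(Δ(1))` of a Frobenius algebra. -/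
noncomputable def FrobeniusStr.window {k A : Type*} [Field k] [Ring A] [Algebra k A]
    (F : FrobeniusStr k A) : A :=
  LinearMap.mul' k A (F.Δ 1)

/-- The map `p = L_{a'} ∘ μ ∘ τ ∘ Δ`, where `a'` is (intended to be) the inverse of the
window element. -/
noncomputable def FrobeniusStr.proj {k A : Type*} [Field k] [Ring A] [Algebra k A]
    (F : FrobeniusStr k A) (a' : A) : A →ₗ[k] A :=
  LinearMap.mulLeft k a' ∘ₗ LinearMap.mul' k A ∘ₗ
    (TensorProduct.comm k A A).toLinearMap ∘ₗ F.Δ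

/-- For a symmetric Frobenius algebra with invertible window element, the map
`p = L_{a'} ∘ μ ∘ τ ∘ Δ` is an idempotent whose range is the centre of `A`. -/
theorem statement0 {k A : Type*} [Field k] [Ring A] [Algebra k A] [FiniteDimensional k A]
    (F : FrobeniusStr k A)
    (hsym : ∀ u v : A, F.ε (u * v) = F.ε (v * u))
    (a' : A) (ha1 : F.window * a' = 1) (ha2 : a' * F.window = 1) :
    F.proj a' ∘ₗ F.proj a' = F.proj a' ∧
      (LinearMap.range (F.proj a') : Set A) = {z : A | ∀ u : A, z * u = u * z} := by
  obtain ⟨S, hS⟩ := TensorProduct.exists_finset (R := k) (F.Δ 1)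
  have h1 : ∀ u : A, F.Δ u = ∑ p ∈ S, (u * p.1) ⊗ₜ[k] p.2 := by
    intro u
    have h := F.frob_left u 1
    rw [mul_one] at h
    rw [← h]
    simp [hS, TensorProduct.tmul_sum, TensorProduct.assoc_symm_tmul,
      LinearMap.mul'_apply, map_sum]
  have h2 : ∀ v : A, F.Δ v = ∑ p ∈ S, p.1 ⊗ₜ[k] (p.2 * v) := by
    intro v
    have h := F.frob_right 1 v
    rw [one_mul] at h
    rw [← h]
    simp [hS, TensorProduct.sum_tmul, TensorProduct.assoc_tmul,
      LinearMap.mul'_apply, map_sum]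
  have h3 : ∀ u : A, (∑ p ∈ S, F.ε (u * p.1) • p.2) = u := by
    intro u
    have h := F.counit_left u
    rw [h1 u] at h
    simpa [map_sum, TensorProduct.lid_tmul] using h
  have hI : ∀ u : A, (∑ p ∈ S, (u * p.1) ⊗ₜ[k] p.2) = ∑ p ∈ S, p.1 ⊗ₜ[k] (p.2 * u) :=
    fun u => (h1 u).symm.trans (h2 u)
  have hCos : (∑ p ∈ S, p.2 ⊗ₜ[k] p.1) = ∑ p ∈ S, p.1 ⊗ₜ[k] p.2 := by
    have lhs : (∑ p ∈ S, p.2 ⊗ₜ[k] p.1)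
        = ∑ p ∈ S, ∑ q ∈ S, F.ε (p.1 * q.1) • (p.2 ⊗ₜ[k] q.2) := by
      refine Finset.sum_congr rfl fun p _ => ?_
      conv_lhs => rw [← h3 p.1]
      rw [TensorProduct.tmul_sum]
      exact Finset.sum_congr rfl fun q _ => by rw [TensorProduct.tmul_smul]
    have rhs : (∑ p ∈ S, p.1 ⊗ₜ[k] p.2)
        = ∑ p ∈ S, ∑ q ∈ S, F.ε (p.1 * q.1) • (q.2 ⊗ₜ[k] p.2) := by
      refine Finset.sum_congr rfl fun p _ => ?_
      conv_lhs => rw [← h3 p.1]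
      rw [TensorProduct.sum_tmul]
      exact Finset.sum_congr rfl fun q _ => by rw [TensorProduct.smul_tmul']
    rw [lhs, rhs]
    rw [Finset.sum_comm]
    exact Finset.sum_congr rfl fun p _ => Finset.sum_congr rfl fun q _ => by rw [hsym]
  have hI2 : ∀ u : A, (∑ p ∈ S, (u * p.2) ⊗ₜ[k] p.1) = ∑ p ∈ S, p.2 ⊗ₜ[k] (p.1 * u) := by
    intro u
    have e1 := congrArg (TensorProduct.map (LinearMap.mulLeft k u) (LinearMap.id : A →ₗ[k] A)) hCos
    have e2 := congrArg (TensorProduct.map (LinearMap.id : A →ₗ[k] A) (LinearMap.mulRight k u)) hCos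
    simp only [map_sum, TensorProduct.map_tmul, LinearMap.mulLeft_apply,
      LinearMap.mulRight_apply, LinearMap.id_apply] at e1 e2
    rw [e1, e2]
    exact hI u
  have hw : F.window = ∑ p ∈ S, p.1 * p.2 := by
    unfold FrobeniusStr.window
    rw [hS]
    simp [map_sum, LinearMap.mul'_apply]
  have hw2 : (∑ p ∈ S, p.2 * p.1) = F.window := by
    have h := congrArg (LinearMap.mul' k A) hCos
    simp only [map_sum, LinearMap.mul'_apply] at h
    rw [hw]; exact h
  have hproj : ∀ u : A, F.proj a' u = a' * ∑ p ∈ S, p.2 * (u * p.1) := by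
    intro u
    show a' * (LinearMap.mul' k A ((TensorProduct.comm k A A) (F.Δ u))) = _
    rw [h1 u]
    simp only [map_sum, TensorProduct.comm_tmul, LinearMap.mul'_apply]
  have hacen : ∀ v : A, F.window * v = v * F.window := by
    intro v
    have h := congrArg (LinearMap.mul' k A) (hI v)
    simp only [map_sum, LinearMap.mul'_apply] at h
    rw [hw, Finset.sum_mul, Finset.mul_sum]
    simp only [mul_assoc] at h ⊢
    exact h.symm
  have ha'cen : ∀ v : A, a' * v = v * a' := by
    intro v
    calc a' * v = a' * (v * (F.window * a')) := by rw [ha1, mul_one]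
      _ = a' * (v * F.window) * a' := by simp only [mul_assoc]
      _ = a' * (F.window * v) * a' := by rw [hacen]
      _ = v * a' := by simp only [← mul_assoc, ha2, one_mul]
  have hTcen : ∀ u v : A, v * (∑ p ∈ S, p.2 * (u * p.1)) = (∑ p ∈ S, p.2 * (u * p.1)) * v := by
    intro u v
    have h := congrArg
      (LinearMap.mul' k A ∘ₗ TensorProduct.map (LinearMap.id : A →ₗ[k] A) (LinearMap.mulLeft k u))
      (hI2 v)
    simp only [LinearMap.coe_comp, Function.comp_apply, map_sum, TensorProduct.map_tmul,
      LinearMap.id_apply, LinearMap.mulLeft_apply, LinearMap.mul'_apply] at h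
    rw [Finset.mul_sum, Finset.sum_mul]
    simp only [mul_assoc] at h ⊢
    exact h
  have hfix : ∀ z : A, (∀ u : A, z * u = u * z) → F.proj a' z = z := by
    intro z hz
    rw [hproj]
    have ht : (∑ p ∈ S, p.2 * (z * p.1)) = F.window * z := by
      rw [← hw2, Finset.sum_mul]
      exact Finset.sum_congr rfl fun p _ => by rw [hz p.1, mul_assoc]
    rw [ht, ← mul_assoc, ha2, one_mul]
  have hcen : ∀ u v : A, (F.proj a' u) * v = v * (F.proj a' u) := by
    intro u v
    rw [hproj, mul_assoc, ← hTcen, ← mul_assoc, ha'cen v, mul_assoc]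
  constructor
  · apply LinearMap.ext; intro u
    simp only [LinearMap.coe_comp, Function.comp_apply]
    exact hfix _ (fun v => hcen u v)
  · ext z
    simp only [SetLike.mem_coe, LinearMap.mem_range, Set.mem_setOf_eq]
    constructor
    · rintro ⟨u, rfl⟩ v
      exact hcen u v
    · intro hz
      exact ⟨z, hfix z hz⟩
end

section
/- Let (A, μ_A, η_A, Δ_A, ε_A) be a symmetric Frobenius algebra over a field k whose window element a := μ_A(Δ_A(1)) is invertible with two-sided inverse a', and let p := L_{a'} ∘ μ_A ∘ τ_{A,A} ∘ Δ_A, the idempotent projection of A onto the centre C := Z(A). Define μ_C : C ⊗ C → C as the restriction of p ∘ μ_A, η_C := p(1) = 1, Δ_C : C → C ⊗ C as the restriction of (p ⊗ p) ∘ Δ_A ∘ L_a (which indeed lands in C ⊗ C), ε_C : C → k as the restriction of ε_A ∘ L_{a'}, let ι : C → A be the inclusion and ι* := L_a ∘ p : A → C. Then: (i) (C, μ_C, η_C, Δ_C, ε_C) is a commutative Frobenius algebra, i.e. Δ_C is coassociative with counit ε_C and the Frobenius relation (id_C ⊗ μ_C) ∘ (Δ_C ⊗ id_C) = Δ_C ∘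 μ_C = (μ_C ⊗ id_C) ∘ (id_C ⊗ Δ_C) holds; (ii) ι is a unital k-algebra homomorphism whose image is central in A; (iii) ε_C(z · ι*(u)) = ε_A(ι(z) · u) for all z ∈ C and u ∈ A (duality); (iv) μ_A ∘ τ_{A,A} ∘ Δ_A = ι ∘ ι* (Cardy condition). -/
open TensorProduct

set_option maxHeartbeats 1000000 in
set_option synthInstance.maxHeartbeats 400000 in
/-- For a symmetric Frobenius algebra `A` with invertible window element, the
centre `C = Z(A)`, equipped with `μ_C = p∘μ_A`, `η_C = p(1)`, `Δ_C = (p⊗p)∘Δ_A∘L_a`,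
`ε_C = ε_A∘L_{a'}`, the inclusion `ι` and `ι* = L_a∘p`, is a commutative Frobenius algebra,
`ι` is a unital algebra homomorphism with central image, and the duality and Cardy conditions
hold. -/
theorem statement1 {k A : Type*} [Field k] [Ring A] [Algebra k A] [FiniteDimensional k A]
    (F : FrobeniusStr k A)
    (hsym : ∀ u v : A, F.ε (u * v) = F.ε (v * u))
    (a' : A) (ha1 : F.window * a' = 1) (ha2 : a' * F.window = 1)
    -- the centre of A
    (C : Subalgebra k A) (hC : C = Subalgebra.center k A)
    -- μ_C : C ⊗ C → C, the restriction of p ∘ μ_A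
    (μC : C ⊗[k] C →ₗ[k] C)
    (hμC : ∀ z w : C, (μC (z ⊗ₜ w) : A) = F.proj a' ((z : A) * (w : A)))
    -- η_C = p(1)
    (ηC : C) (hηC : (ηC : A) = F.proj a' 1)
    -- Δ_C : C → C ⊗ C, the corestriction of (p ⊗ p) ∘ Δ_A ∘ L_a
    (ΔC : C →ₗ[k] C ⊗[k] C)
    (hΔC : ∀ z : C,
      (TensorProduct.map C.val.toLinearMap C.val.toLinearMap) (ΔC z) =
        (TensorProduct.map (F.proj a') (F.proj a')) (F.Δ (F.window * (z : A))))
    -- ε_C = ε_A ∘ L_{a'}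
    (εC : C →ₗ[k] k) (hεC : ∀ z : C, εC z = F.ε (a' * (z : A)))
    -- ι* = L_a ∘ p
    (ιs : A →ₗ[k] C) (hιs : ∀ u : A, (ιs u : A) = F.window * F.proj a' u) :
    -- (i) (C, μ_C, η_C, Δ_C, ε_C) is a commutative Frobenius algebra
    ((∀ z w : C, μC (z ⊗ₜ w) = μC (w ⊗ₜ z)) ∧
     (∀ z w x : C, μC (μC (z ⊗ₜ w) ⊗ₜ x) = μC (z ⊗ₜ μC (w ⊗ₜ x))) ∧
     (∀ z : C, μC (ηC ⊗ₜ z) = z) ∧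
     (∀ z : C,
        (TensorProduct.assoc k C C C) ((TensorProduct.map ΔC LinearMap.id) (ΔC z)) =
          (TensorProduct.map LinearMap.id ΔC) (ΔC z)) ∧
     (∀ z : C, (TensorProduct.lid k C) ((TensorProduct.map εC LinearMap.id) (ΔC z)) = z) ∧
     (∀ z : C, (TensorProduct.rid k C) ((TensorProduct.map LinearMap.id εC) (ΔC z)) = z) ∧
     (∀ z w : C,
        (TensorProduct.map (LinearMap.id) μC)
            ((TensorProduct.assoc k C C C) ((TensorProduct.map ΔC LinearMap.id) (z ⊗ₜ w))) =
          ΔC (μC (z ⊗ₜ w)) ∧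
        (TensorProduct.map μC (LinearMap.id))
            ((TensorProduct.assoc k C C C).symm ((TensorProduct.map LinearMap.id ΔC) (z ⊗ₜ w))) =
          ΔC (μC (z ⊗ₜ w)))) ∧
    -- (ii) ι is a unital algebra homomorphism with central image
    ((∀ z w : C, (μC (z ⊗ₜ w) : A) = (z : A) * (w : A)) ∧
     (ηC : A) = 1 ∧
     (∀ (z : C) (u : A), (z : A) * u = u * (z : A))) ∧
    -- (iii) duality
    (∀ (z : C) (u : A), εC (μC (z ⊗ₜ ιs u)) = F.ε ((z : A) * u)) ∧
    -- (iv) Cardy condition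
    (∀ u : A,
      LinearMap.mul' k A ((TensorProduct.comm k A A) (F.Δ u)) = (ιs u : A)) := by
  classical
  obtain ⟨S, hc⟩ := TensorProduct.exists_finset (F.Δ 1)
  have hΔA : ∀ u : A, F.Δ u = ∑ x ∈ S, (u * x.1) ⊗ₜ[k] x.2 := by
    intro u
    have h := F.frob_left u 1
    rw [mul_one] at h
    rw [← h]
    simp [hc, TensorProduct.tmul_sum, map_sum, TensorProduct.assoc_symm_tmul,
      TensorProduct.map_tmul, LinearMap.mul'_apply]
  have hΔB : ∀ u : A, F.Δ u = ∑ x ∈ S, x.1 ⊗ₜ[k] (x.2 * u) := by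
    intro u
    have h := F.frob_right 1 u
    rw [one_mul] at h
    rw [← h]
    simp [hc, TensorProduct.sum_tmul, map_sum, TensorProduct.assoc_tmul,
      TensorProduct.map_tmul, LinearMap.mul'_apply]
  have hcl : ∀ u : A, ∑ x ∈ S, F.ε (u * x.1) • x.2 = u := by
    intro u
    have h := F.counit_left u
    rw [hΔA u] at h
    simpa [map_sum, TensorProduct.map_tmul, TensorProduct.lid_tmul] using h
  have hcr : ∀ u : A, ∑ x ∈ S, F.ε (x.2 * u) • x.1 = u := by
    intro u
    have h := F.counit_right u
    rw [hΔB u] at h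
    simpa [map_sum, TensorProduct.map_tmul, TensorProduct.rid_tmul] using h
  have hcl' : ∀ u : A, ∑ x ∈ S, F.ε (u * x.2) • x.1 = u := by
    intro u
    rw [Finset.sum_congr rfl (fun x _ => by rw [hsym] : ∀ x ∈ S, F.ε (u * x.2) • x.1 = F.ε (x.2 * u) • x.1)]
    exact hcr u
  have hsymc : ∑ x ∈ S, x.2 ⊗ₜ[k] x.1 = ∑ x ∈ S, x.1 ⊗ₜ[k] x.2 := by
    symm
    calc ∑ x ∈ S, x.1 ⊗ₜ[k] x.2
        = ∑ x ∈ S, x.1 ⊗ₜ[k] (∑ y ∈ S, F.ε (x.2 * y.2) • y.1) := by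
          exact Finset.sum_congr rfl (fun x _ => by rw [hcl' x.2])
      _ = ∑ y ∈ S, (∑ x ∈ S, F.ε (x.2 * y.2) • x.1) ⊗ₜ[k] y.1 := by
          simp only [TensorProduct.tmul_sum, TensorProduct.tmul_smul, TensorProduct.sum_tmul,
            TensorProduct.smul_tmul']
          rw [Finset.sum_comm]
      _ = ∑ y ∈ S, y.2 ⊗ₜ[k] y.1 := by
          exact Finset.sum_congr rfl (fun y _ => by rw [hcr y.2])
  -- Q and p
  set a := F.window with ha_def
  set p := F.proj a' with hp_def
  set Q : A → A := fun u => LinearMap.mul' k A ((TensorProduct.comm k A A) (F.Δ u)) with hQ_def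
  have hQ : ∀ u : A, Q u = ∑ x ∈ S, x.2 * (u * x.1) := by
    intro u
    rw [hQ_def]
    simp only [hΔA u, map_sum, TensorProduct.comm_tmul, LinearMap.mul'_apply]
  have hQ' : ∀ u : A, Q u = ∑ x ∈ S, x.1 * (u * x.2) := by
    intro u
    have h := congrArg (fun t => LinearMap.mul' k A
      ((TensorProduct.map (LinearMap.mulRight k u) LinearMap.id) t)) hsymc
    simp only [map_sum, TensorProduct.map_tmul, LinearMap.mulRight_apply, LinearMap.id_coe,
      id_eq, LinearMap.mul'_apply, mul_assoc] at h
    rw [hQ u]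
    rw [Finset.sum_congr rfl (fun x _ => by rw [← mul_assoc] :
      ∀ x ∈ S, x.2 * (u * x.1) = (x.2 * u) * x.1)]
    simpa [mul_assoc] using h
  have hp : ∀ u : A, p u = a' * Q u := by
    intro u
    simp [hp_def, FrobeniusStr.proj, hQ_def, LinearMap.mulLeft_apply]
  have hca : a = ∑ x ∈ S, x.1 * x.2 := by
    simp [ha_def, FrobeniusStr.window, hc, map_sum, LinearMap.mul'_apply]
  have hQ1 : Q 1 = a := by
    rw [hQ' 1, hca]; simp
  have hCas1 : ∀ u : A, ∑ x ∈ S, (u * x.1) ⊗ₜ[k] x.2 = ∑ x ∈ S, x.1 ⊗ₜ[k] (x.2 * u) := by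
    intro u; rw [← hΔA u, hΔB u]
  have hQc : ∀ u v : A, v * Q u = Q u * v := by
    intro u v
    have h := congrArg (fun t => LinearMap.mul' k A
      ((TensorProduct.map LinearMap.id (LinearMap.mulLeft k u)) t)) (hCas1 v)
    simp only [map_sum, TensorProduct.map_tmul, LinearMap.mulLeft_apply, LinearMap.id_coe,
      id_eq, LinearMap.mul'_apply] at h
    rw [hQ' u, Finset.mul_sum, Finset.sum_mul]
    calc ∑ x ∈ S, v * (x.1 * (u * x.2)) = ∑ x ∈ S, v * x.1 * (u * x.2) := by
          simp [mul_assoc]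
      _ = ∑ x ∈ S, x.1 * (u * (x.2 * v)) := h
      _ = ∑ x ∈ S, x.1 * (u * x.2) * v := by simp [mul_assoc]
  have haC : ∀ v : A, v * a = a * v := fun v => hQ1 ▸ hQc 1 v
  have ha1' : a * a' = 1 := ha1
  have ha2' : a' * a = 1 := ha2
  have ha'C : ∀ v : A, v * a' = a' * v := by
    intro v
    calc v * a' = (a' * a) * (v * a') := by rw [ha2', one_mul]
      _ = a' * ((a * v) * a') := by simp [mul_assoc]
      _ = a' * ((v * a) * a') := by rw [haC]
      _ = a' * (v * (a * a')) := by simp [mul_assoc]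
      _ = a' * v := by rw [ha1', mul_one]
  have hQz : ∀ z : A, (∀ w, w * z = z * w) → ∀ u, Q (z * u) = z * Q u := by
    intro z hz u
    rw [hQ (z*u), hQ u, Finset.mul_sum]
    refine Finset.sum_congr rfl (fun x _ => ?_)
    calc x.2 * (z * u * x.1) = (x.2 * z) * (u * x.1) := by simp [mul_assoc]
      _ = (z * x.2) * (u * x.1) := by rw [hz]
      _ = z * (x.2 * (u * x.1)) := by simp [mul_assoc]
  have hQz' : ∀ z : A, (∀ w, w * z = z * w) → ∀ u, Q (u * z) = z * Q u := by
    intro z hz u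
    rw [hQc]
    rw [hQ (u*z), hQ u, Finset.sum_mul]
    refine Finset.sum_congr rfl (fun x _ => ?_)
    calc x.2 * (u * z * x.1) = x.2 * (u * (z * x.1)) := by simp [mul_assoc]
      _ = x.2 * (u * (x.1 * z)) := by rw [hz]
      _ = (x.2 * (u * x.1)) * z := by simp [mul_assoc]
  have hpz : ∀ z : A, (∀ w, w * z = z * w) → ∀ u, p (z * u) = z * p u := by
    intro z hz u
    rw [hp, hp, hQz z hz u]
    calc a' * (z * Q u) = (a' * z) * Q u := by rw [mul_assoc]
      _ = (z * a') * Q u := by rw [ha'C]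
      _ = z * (a' * Q u) := by rw [mul_assoc]
  have hpz' : ∀ z : A, (∀ w, w * z = z * w) → ∀ u, p (u * z) = z * p u := by
    intro z hz u
    rw [hp, hp, hQz' z hz u]
    calc a' * (z * Q u) = (a' * z) * Q u := by rw [mul_assoc]
      _ = (z * a') * Q u := by rw [ha'C]
      _ = z * (a' * Q u) := by rw [mul_assoc]
  have hp_fix : ∀ z : A, (∀ w, w * z = z * w) → p z = z := by
    intro z hz
    have : p z = z * p 1 := by
      have := hpz z hz 1; rwa [mul_one] at this
    rw [this, hp, hQ1, ha2', mul_one]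
  have hp1 : p 1 = 1 := by rw [hp, hQ1, ha2']
  have hp_central : ∀ u v : A, v * p u = p u * v := by
    intro u v
    rw [hp]
    calc v * (a' * Q u) = (v * a') * Q u := by rw [mul_assoc]
      _ = (a' * v) * Q u := by rw [ha'C]
      _ = a' * (v * Q u) := by rw [mul_assoc]
      _ = a' * (Q u * v) := by rw [hQc]
      _ = (a' * Q u) * v := by rw [mul_assoc]
  have hmove : ∀ v u : A, F.ε (v * Q u) = F.ε (Q v * u) := by
    intro v u
    rw [hQ u, hQ' v, Finset.mul_sum, Finset.sum_mul, map_sum, map_sum]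
    refine Finset.sum_congr rfl (fun x _ => ?_)
    calc F.ε (v * (x.2 * (u * x.1)))
        = F.ε ((v * (x.2 * u)) * x.1) := by simp [mul_assoc]
      _ = F.ε (x.1 * (v * (x.2 * u))) := by rw [hsym]
      _ = F.ε (x.1 * (v * x.2) * u) := by simp [mul_assoc]
  have hQcen : ∀ z : A, (∀ w, w * z = z * w) → Q z = z * a := by
    intro z hz
    have := hQz z hz 1
    rwa [mul_one, hQ1] at this
  have hεp : ∀ v : A, (∀ w, w * v = v * w) → ∀ u, F.ε (v * p u) = F.ε (v * u) := by
    intro v hv u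
    have hva' : ∀ w, w * (v * a') = (v * a') * w := by
      intro w
      calc w * (v * a') = (w * v) * a' := by rw [mul_assoc]
        _ = (v * w) * a' := by rw [hv]
        _ = v * (w * a') := by rw [mul_assoc]
        _ = v * (a' * w) := by rw [ha'C]
        _ = (v * a') * w := by rw [mul_assoc]
    calc F.ε (v * p u) = F.ε ((v * a') * Q u) := by rw [hp, mul_assoc]
      _ = F.ε (Q (v * a') * u) := hmove _ _
      _ = F.ε ((v * a' * a) * u) := by rw [hQcen _ hva']
      _ = F.ε (v * u) := by rw [mul_assoc v a' a, ha2', mul_one]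
  -- centre infrastructure
  have hz_of : ∀ (z : C) (w : A), w * (z : A) = (z : A) * w := by
    intro z w
    have hz : (z : A) ∈ Subalgebra.center k A := by rw [← hC]; exact z.2
    exact Subalgebra.mem_center_iff.mp hz w
  have hμAB : ∀ z w : C, (μC (z ⊗ₜ w) : A) = (z : A) * (w : A) := by
    intro z w
    rw [hμC]
    refine hp_fix _ (fun g => ?_)
    rw [← mul_assoc, hz_of z g, mul_assoc, hz_of w g, ← mul_assoc]
  have hμprod : ∀ z w : C, μC (z ⊗ₜ w) = z * w := by
    intro z w
    exact Subtype.ext (by rw [hμAB]; rfl)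
  have hp1' : (ηC : A) = 1 := by rw [hηC]; exact hp1
  have hηC1 : ηC = 1 := Subtype.ext (by rw [hp1']; rfl)
  -- injectivity of map val val
  obtain ⟨r, hr⟩ := C.val.toLinearMap.exists_leftInverse_of_injective
    (LinearMap.ker_eq_bot.mpr Subtype.val_injective)
  have hinj2 : ∀ X Y : C ⊗[k] C,
      (TensorProduct.map C.val.toLinearMap C.val.toLinearMap) X =
        (TensorProduct.map C.val.toLinearMap C.val.toLinearMap) Y → X = Y := by
    have hretr : ∀ X : C ⊗[k] C, (TensorProduct.map r r)
        ((TensorProduct.map C.val.toLinearMap C.val.toLinearMap) X) = X := by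
      intro X
      rw [← LinearMap.comp_apply, ← TensorProduct.map_comp, hr, TensorProduct.map_id,
        LinearMap.id_apply]
    intro X Y h
    rw [← hretr X, h, hretr Y]
  obtain ⟨T, hT⟩ := TensorProduct.exists_finset (ΔC 1)
  have hTS : ∑ y ∈ T, (y.1 : A) ⊗ₜ[k] (y.2 : A) = ∑ x ∈ S, p (a * x.1) ⊗ₜ[k] p x.2 := by
    have h1 := hΔC 1
    rw [hT] at h1
    simp only [map_sum, TensorProduct.map_tmul, AlgHom.toLinearMap_apply,
      Subalgebra.coe_val, OneMemClass.coe_one, mul_one] at h1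
    rw [h1, hΔA a]
    simp only [map_sum, TensorProduct.map_tmul]
  have hsplit : ∀ w v : A, F.Δ (w * v) = ∑ x ∈ S, (w * x.1) ⊗ₜ[k] (x.2 * v) := by
    intro w v
    have h := congrArg (TensorProduct.map LinearMap.id (LinearMap.mulRight k v))
      ((hΔA w).symm.trans (hΔB w))
    simp only [map_sum, TensorProduct.map_tmul, LinearMap.id_coe, id_eq,
      LinearMap.mulRight_apply, mul_assoc] at h
    rw [hΔB (w * v)]
    exact h.symm
  have hmix : ∀ u v : C, ΔC (u * v) = ∑ y ∈ T, (u * y.1) ⊗ₜ[k] (y.2 * v) := by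
    intro u v
    apply hinj2
    rw [hΔC (u * v)]
    have hco : ((u * v : C) : A) = (u : A) * (v : A) := rfl
    have hre : a * ((u : A) * v) = ((u : A) * a) * (v : A) := by
      rw [← mul_assoc, hz_of u a]
    rw [hco, hre, hsplit]
    have h2 := congrArg (TensorProduct.map (LinearMap.mulLeft k (u : A))
      (LinearMap.mulRight k (v : A))) hTS
    simp only [map_sum, TensorProduct.map_tmul, LinearMap.mulLeft_apply,
      LinearMap.mulRight_apply] at h2
    simp only [map_sum, TensorProduct.map_tmul, AlgHom.toLinearMap_apply, Subalgebra.coe_val,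
      MulMemClass.coe_mul]
    rw [h2]
    refine Finset.sum_congr rfl (fun x _ => ?_)
    rw [mul_assoc, hpz _ (hz_of u), hpz' _ (hz_of v), ← hp_central]
  have hQ1C : ∀ z : C, ΔC z = ∑ y ∈ T, (z * y.1) ⊗ₜ[k] y.2 := by
    intro z
    have := hmix z 1
    simpa [mul_one] using this
  have hQ2C : ∀ z : C, ΔC z = ∑ y ∈ T, y.1 ⊗ₜ[k] (y.2 * z) := by
    intro z
    have := hmix 1 z
    simpa [one_mul] using this
  have hcommC : ∀ z w : C, z * w = w * z := fun z w =>
    Subtype.ext (show (z : A) * w = (w : A) * z from (hz_of z w).symm)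
  refine ⟨⟨?_, ?_, ?_, ?_, ?_, ?_, ?_⟩, ⟨hμAB, hp1', fun z u => (hz_of z u).symm⟩, ?_, ?_⟩
  · -- commutativity
    intro z w
    rw [hμprod, hμprod, hcommC]
  · -- associativity
    intro z w x
    rw [hμprod, hμprod, hμprod, hμprod, mul_assoc]
  · -- unit
    intro z
    rw [hηC1, hμprod, one_mul]
  · -- coassociativity
    intro z
    have hL : (TensorProduct.assoc k C C C) ((TensorProduct.map ΔC LinearMap.id) (ΔC z)) =
        ∑ y ∈ T, ∑ y' ∈ T, y'.1 ⊗ₜ[k] ((y'.2 * y.1) ⊗ₜ[k] (y.2 * z)) := by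
      rw [hQ2C z, map_sum, map_sum]
      refine Finset.sum_congr rfl (fun y _ => ?_)
      rw [TensorProduct.map_tmul, hQ2C y.1, TensorProduct.sum_tmul, map_sum]
      simp only [LinearMap.id_coe, id_eq, TensorProduct.assoc_tmul]
    have hR : (TensorProduct.map LinearMap.id ΔC) (ΔC z) =
        ∑ y' ∈ T, ∑ y ∈ T, y'.1 ⊗ₜ[k] ((y'.2 * y.1) ⊗ₜ[k] (y.2 * z)) := by
      rw [hQ2C z, map_sum]
      refine Finset.sum_congr rfl (fun y' _ => ?_)
      rw [TensorProduct.map_tmul, hmix y'.2 z, TensorProduct.tmul_sum]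
      simp only [LinearMap.id_coe, id_eq]
    rw [hL, hR, Finset.sum_comm]
  · -- left counit
    intro z
    rw [hQ1C z]
    simp only [map_sum, TensorProduct.map_tmul, LinearMap.id_coe, id_eq,
      TensorProduct.lid_tmul]
    apply Subtype.val_injective
    simp only [AddSubmonoidClass.coe_finset_sum, SetLike.val_smul]
    have hc2 : ∀ w, w * (a' * (z : A)) = (a' * (z : A)) * w := by
      intro w
      rw [← mul_assoc, ha'C, mul_assoc, hz_of z w, ← mul_assoc]
    have hterm : ∀ y ∈ T, εC (z * y.1) • (y.2 : A) =
        F.ε ((a' * (z : A)) * (y.1 : A)) • (y.2 : A) := by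
      intro y _
      rw [hεC]
      congr 1
      rw [MulMemClass.coe_mul, ← mul_assoc]
    rw [Finset.sum_congr rfl hterm]
    have h3 := congrArg (fun t => (TensorProduct.lid k A)
      ((TensorProduct.map (F.ε ∘ₗ LinearMap.mulLeft k (a' * (z : A))) LinearMap.id) t)) hTS
    simp only [map_sum, TensorProduct.map_tmul, LinearMap.comp_apply,
      LinearMap.mulLeft_apply, LinearMap.id_coe, id_eq, TensorProduct.lid_tmul] at h3
    rw [h3]
    have hterm2 : ∀ x ∈ S, F.ε ((a' * (z : A)) * p (a * x.1)) • p x.2 =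
        F.ε ((z : A) * x.1) • p x.2 := by
      intro x _
      rw [hεp _ hc2]
      congr 2
      have h4 : (a' * (z : A)) * a = (z : A) := by
        rw [mul_assoc, ← hz_of z a, ← mul_assoc, ha2', one_mul]
      rw [← mul_assoc, h4]
    rw [Finset.sum_congr rfl hterm2]
    calc ∑ x ∈ S, F.ε ((z : A) * x.1) • p x.2
        = p (∑ x ∈ S, F.ε ((z : A) * x.1) • x.2) := by
          rw [map_sum]
          exact Finset.sum_congr rfl (fun x _ => by rw [map_smul])
      _ = p (z : A) := by rw [hcl]
      _ = (z : A) := hp_fix _ (hz_of z)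
  · -- right counit
    intro z
    rw [hQ2C z]
    simp only [map_sum, TensorProduct.map_tmul, LinearMap.id_coe, id_eq,
      TensorProduct.rid_tmul]
    apply Subtype.val_injective
    simp only [AddSubmonoidClass.coe_finset_sum, SetLike.val_smul]
    have hc2 : ∀ w, w * ((z : A) * a') = ((z : A) * a') * w := by
      intro w
      rw [← mul_assoc, hz_of z w, mul_assoc, ha'C, ← mul_assoc]
    have hterm : ∀ y ∈ T, εC (y.2 * z) • (y.1 : A) =
        F.ε (((z : A) * a') * (y.2 : A)) • (y.1 : A) := by
      intro y _
      rw [hεC]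
      congr 1
      rw [MulMemClass.coe_mul, ← mul_assoc, hsym, ← mul_assoc]
    rw [Finset.sum_congr rfl hterm]
    have h3 := congrArg (fun t => (TensorProduct.rid k A)
      ((TensorProduct.map LinearMap.id (F.ε ∘ₗ LinearMap.mulLeft k ((z : A) * a'))) t)) hTS
    simp only [map_sum, TensorProduct.map_tmul, LinearMap.comp_apply,
      LinearMap.mulLeft_apply, LinearMap.id_coe, id_eq, TensorProduct.rid_tmul] at h3
    rw [h3]
    have hterm2 : ∀ x ∈ S, F.ε (((z : A) * a') * p x.2) • p (a * x.1) =
        F.ε (((z : A) * a') * x.2) • p (a * x.1) := by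
      intro x _
      rw [hεp _ hc2]
    rw [Finset.sum_congr rfl hterm2]
    calc ∑ x ∈ S, F.ε (((z : A) * a') * x.2) • p (a * x.1)
        = p (a * ∑ x ∈ S, F.ε (((z : A) * a') * x.2) • x.1) := by
          rw [Finset.mul_sum, map_sum]
          refine Finset.sum_congr rfl (fun x _ => ?_)
          rw [mul_smul_comm, map_smul]
      _ = p (a * ((z : A) * a')) := by rw [hcl']
      _ = p (z : A) := by rw [← mul_assoc, hz_of z a, mul_assoc, ha1', mul_one]
      _ = (z : A) := hp_fix _ (hz_of z)
  · -- Frobenius relation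
    intro z w
    constructor
    · rw [hμprod z w, hQ2C (z * w)]
      rw [TensorProduct.map_tmul, hQ2C z, TensorProduct.sum_tmul, map_sum, map_sum]
      simp only [LinearMap.id_coe, id_eq, TensorProduct.assoc_tmul, TensorProduct.map_tmul]
      refine Finset.sum_congr rfl (fun y _ => ?_)
      rw [hμprod, mul_assoc]
    · rw [hμprod z w, hQ1C (z * w)]
      rw [TensorProduct.map_tmul, hQ1C w, TensorProduct.tmul_sum, map_sum, map_sum]
      simp only [LinearMap.id_coe, id_eq, TensorProduct.assoc_symm_tmul,
        TensorProduct.map_tmul]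
      refine Finset.sum_congr rfl (fun y _ => ?_)
      rw [hμprod, ← mul_assoc]
  · -- duality
    intro z u
    rw [hεC, hμAB, hιs]
    have h1 : a' * ((z : A) * (a * p u)) = (z : A) * p u := by
      rw [← mul_assoc, hz_of z a', mul_assoc, ← mul_assoc a' a, ha2', one_mul]
    rw [h1, hεp _ (hz_of z)]
  · -- Cardy
    intro u
    rw [hιs, hp, ← mul_assoc, ha1', one_mul]
end

section
/- Let (A, μ, η, Δ, ε) be a symmetric Frobenius algebra over a field k whose window element a := μ(Δ(1)) is invertible with two-sided inverse a', and let p := L_{a'} ∘ μ ∘ τ_{A,A} ∘ Δ be the idempotent projection onto the centre. For j ≥ 1 let μ^{(j)} : A^{⊗j} → A and Δ^{(j)} : A → A^{⊗j} be the iterated multiplication and comultiplication (μ^{(1)} = id = Δ^{(1)}, μ^{(j+1)} = μ ∘ (μ^{(j)} ⊗ id_A), Δ^{(j+1)} = (Δ^{(j)} ⊗ id_A) ∘ Δ), and define P_{jℓ} := Δ^{(j)} ∘ L_{(a')^{j−1}} ∘ μ^{(ℓ)} : A^{⊗ℓ} → A^{⊗j} and Q_{jℓ} := Δ^{(j)}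 ∘ L_{(a')^{j−1}} ∘ p ∘ μ^{(ℓ)} : A^{⊗ℓ} → A^{⊗j}. Then P_{jℓ} ∘ P_{ℓm} = P_{jm} and Q_{jℓ} ∘ Q_{ℓm} = Q_{jm} for all j, ℓ, m ≥ 1. In particular P_{jj} and Q_{jj} are idempotents, P_{11} = id_A, Q_{11} = p; moreover P_{1j} ∘ P_{j1} = id_A and P_{j1} ∘ P_{1j} = P_{jj}, so P_{1j} restricts to a k-linear isomorphism range(P_{jj}) ≅ A with inverse the corestriction of P_{j1}, and likewise Q_{1j} ∘ Q_{j1} = p and Q_{j1} ∘ Q_{1j} = Q_{jj}, so Q_{1j} restricts to an isomorphism range(Q_{jj}) ≅ range(p) with inverse the corestriction of Q_{j1}. -/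
open TensorProduct

section Aux

variable {k A : Type*} [Field k] [Ring A] [Algebra k A] (F : FrobeniusStr k A)

namespace FrobAux

lemma aux_left (u : A) : ∀ t : A ⊗[k] A,
    TensorProduct.map (LinearMap.mul' k A) LinearMap.id
      ((TensorProduct.assoc k A A A).symm (u ⊗ₜ t)) =
    TensorProduct.map (LinearMap.mulLeft k u) LinearMap.id t := by
  intro t
  induction t using TensorProduct.induction_on with
  | zero => simp only [TensorProduct.tmul_zero, LinearEquiv.map_zero, LinearMap.map_zero]
  | tmul x y => simp [LinearMap.mul'_apply]
  | add s t hs ht =>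
      rw [TensorProduct.tmul_add]; simp only [map_add, hs, ht]

lemma aux_right (v : A) : ∀ t : A ⊗[k] A,
    TensorProduct.map LinearMap.id (LinearMap.mul' k A)
      ((TensorProduct.assoc k A A A) (t ⊗ₜ v)) =
    TensorProduct.map LinearMap.id (LinearMap.mulRight k v) t := by
  intro t
  induction t using TensorProduct.induction_on with
  | zero => simp only [TensorProduct.zero_tmul, LinearEquiv.map_zero, LinearMap.map_zero]
  | tmul x y => simp [LinearMap.mul'_apply]
  | add s t hs ht =>
      rw [TensorProduct.add_tmul]; simp only [map_add, hs, ht]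

lemma delta_left (u v : A) :
    F.Δ (u * v) = TensorProduct.map (LinearMap.mulLeft k u) LinearMap.id (F.Δ v) := by
  rw [← F.frob_left u v]
  have h : TensorProduct.map LinearMap.id F.Δ (u ⊗ₜ[k] v) = u ⊗ₜ F.Δ v := by simp
  rw [h, aux_left]

lemma delta_right (u v : A) :
    F.Δ (u * v) = TensorProduct.map LinearMap.id (LinearMap.mulRight k v) (F.Δ u) := by
  rw [← F.frob_right u v]
  have h : TensorProduct.map F.Δ LinearMap.id (u ⊗ₜ[k] v) = F.Δ u ⊗ₜ v := by simp
  rw [h, aux_right]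

lemma delta_one_left (u : A) :
    F.Δ u = TensorProduct.map (LinearMap.mulLeft k u) LinearMap.id (F.Δ 1) := by
  simpa using delta_left F u 1

lemma delta_one_right (u : A) :
    F.Δ u = TensorProduct.map LinearMap.id (LinearMap.mulRight k u) (F.Δ 1) := by
  simpa using delta_right F 1 u

lemma casimir (x : A) :
    TensorProduct.map (LinearMap.mulLeft k x) LinearMap.id (F.Δ 1)
      = TensorProduct.map LinearMap.id (LinearMap.mulRight k x) (F.Δ 1) :=
  (delta_one_left F x).symm.trans (delta_one_right F x)

lemma mu_map_left (x : A) : ∀ t : A ⊗[k] A,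
    LinearMap.mul' k A (TensorProduct.map (LinearMap.mulLeft k x) LinearMap.id t)
      = x * LinearMap.mul' k A t := by
  intro t
  induction t using TensorProduct.induction_on with
  | zero => simp
  | tmul s t' => simp [LinearMap.mul'_apply, mul_assoc]
  | add s t hs ht => simp only [map_add, hs, ht, mul_add]

lemma mu_map_right (x : A) : ∀ t : A ⊗[k] A,
    LinearMap.mul' k A (TensorProduct.map LinearMap.id (LinearMap.mulRight k x) t)
      = LinearMap.mul' k A t * x := by
  intro t
  induction t using TensorProduct.induction_on with
  | zero => simp
  | tmul s t' => simp [LinearMap.mul'_apply, mul_assoc]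
  | add s t hs ht => simp only [map_add, hs, ht, add_mul]

lemma mu_delta (u : A) : LinearMap.mul' k A (F.Δ u) = F.window * u := by
  rw [delta_one_right F u, mu_map_right]; rfl

noncomputable def phi : A →ₗ[k] Module.Dual k A where
  toFun x := F.ε ∘ₗ LinearMap.mulRight k x
  map_add' x y := by
    ext u
    simp [mul_add]
  map_smul' c x := by
    ext u
    simp [mul_smul_comm]

@[simp] lemma phi_apply (x u : A) : phi F x u = F.ε (u * x) := rfl

lemma map_id_comp_apply (g : A →ₗ[k] A) (h : A →ₗ[k] k) : ∀ t : A ⊗[k] A,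
    TensorProduct.map LinearMap.id h (TensorProduct.map LinearMap.id g t)
      = TensorProduct.map LinearMap.id (h ∘ₗ g) t := by
  intro t
  induction t using TensorProduct.induction_on with
  | zero => simp
  | tmul x y => simp
  | add s t hs ht => simp only [map_add, hs, ht]

lemma map_id_zero_apply : ∀ t : A ⊗[k] A,
    TensorProduct.map (LinearMap.id : A →ₗ[k] A) (0 : A →ₗ[k] k) t = 0 := by
  intro t
  induction t using TensorProduct.induction_on with
  | zero => simp
  | tmul x y => simp
  | add s t hs ht => simp only [map_add, hs, ht, add_zero]

lemma phi_inj : Function.Injective (phi F) := by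
  have key : ∀ z : A, phi F z = 0 → z = 0 := by
    intro z hz
    have hc := F.counit_right z
    rw [delta_one_right F z, map_id_comp_apply] at hc
    have hcz : F.ε ∘ₗ LinearMap.mulRight k z = 0 := hz
    rw [hcz, map_id_zero_apply, map_zero] at hc
    exact hc.symm
  intro x y hxy
  have h0 : phi F (x - y) = 0 := by rw [map_sub, hxy, sub_self]
  exact sub_eq_zero.mp (key _ h0)

noncomputable def theta : A ⊗[k] A →ₗ[k] (A →ₗ[k] A) :=
  dualTensorHom k A A ∘ₗ TensorProduct.map (phi F) LinearMap.id

lemma theta_inj [FiniteDimensional k A] : Function.Injective (theta F) := by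
  have h1 : Function.Injective (dualTensorHom k A A) := by
    intro s t hst
    apply (dualTensorHomEquiv k A A).injective
    simpa [dualTensorHomEquiv] using hst
  have h2 : Function.Injective
      (TensorProduct.map (phi F) (LinearMap.id : A →ₗ[k] A)) := by
    have he : TensorProduct.map (phi F) (LinearMap.id : A →ₗ[k] A)
        = LinearMap.rTensor A (phi F) := rfl
    rw [he]
    exact Module.Flat.rTensor_preserves_injective_linearMap _ (phi_inj F)
  exact h1.comp h2

lemma theta_C (u : A) : theta F (F.Δ 1) u = u := by
  have h : ∀ t : A ⊗[k] A, theta F t u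
      = TensorProduct.lid k A (TensorProduct.map F.ε LinearMap.id
          (TensorProduct.map (LinearMap.mulLeft k u) LinearMap.id t)) := by
    intro t
    induction t using TensorProduct.induction_on with
    | zero => simp [theta]
    | tmul x y => simp [theta]
    | add s t hs ht => simp only [map_add, LinearMap.add_apply, hs, ht]
  rw [h, ← delta_one_left F u, F.counit_left]

lemma theta_commC (hsym : ∀ u v : A, F.ε (u * v) = F.ε (v * u)) (u : A) :
    theta F (TensorProduct.comm k A A (F.Δ 1)) u = u := by
  have hε : F.ε ∘ₗ LinearMap.mulLeft k u = F.ε ∘ₗ LinearMap.mulRight k u := by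
    ext v
    exact hsym u v
  have h : ∀ t : A ⊗[k] A, theta F (TensorProduct.comm k A A t) u
      = TensorProduct.rid k A
          (TensorProduct.map LinearMap.id (F.ε ∘ₗ LinearMap.mulLeft k u) t) := by
    intro t
    induction t using TensorProduct.induction_on with
    | zero => simp [theta]
    | tmul x y => simp [theta]
    | add s t hs ht => simp only [map_add, LinearMap.add_apply, hs, ht]
  rw [h, hε, ← map_id_comp_apply (LinearMap.mulRight k u) F.ε,
    ← delta_one_right F u, F.counit_right]

lemma cSymm [FiniteDimensional k A] (hsym : ∀ u v : A, F.ε (u * v) = F.ε (v * u)) :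
    TensorProduct.comm k A A (F.Δ 1) = F.Δ 1 :=
  theta_inj F (LinearMap.ext fun u => by rw [theta_commC F hsym u, theta_C F u])

lemma comm_map_right (g : A →ₗ[k] A) : ∀ t : A ⊗[k] A,
    TensorProduct.comm k A A (TensorProduct.map LinearMap.id g t)
      = TensorProduct.map g LinearMap.id (TensorProduct.comm k A A t) := by
  intro t
  induction t using TensorProduct.induction_on with
  | zero => simp
  | tmul x y => simp
  | add s t hs ht => simp only [map_add, hs, ht]

lemma comm_map_left (f : A →ₗ[k] A) : ∀ t : A ⊗[k] A,
    TensorProduct.comm k A A (TensorProduct.map f LinearMap.id t)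
      = TensorProduct.map LinearMap.id f (TensorProduct.comm k A A t) := by
  intro t
  induction t using TensorProduct.induction_on with
  | zero => simp
  | tmul x y => simp
  | add s t hs ht => simp only [map_add, hs, ht]

lemma proj_apply (a' u : A) :
    F.proj a' u = a' * LinearMap.mul' k A (TensorProduct.comm k A A (F.Δ u)) := rfl

lemma z_eq [FiniteDimensional k A] (hsym : ∀ u v : A, F.ε (u * v) = F.ε (v * u)) (u : A) :
    TensorProduct.comm k A A (F.Δ u)
      = TensorProduct.map (LinearMap.mulRight k u) LinearMap.id (F.Δ 1) := by
  rw [delta_one_right F u, comm_map_right, cSymm F hsym]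

lemma z_central [FiniteDimensional k A] (hsym : ∀ u v : A, F.ε (u * v) = F.ε (v * u))
    (u x : A) :
    x * LinearMap.mul' k A (TensorProduct.comm k A A (F.Δ u))
      = LinearMap.mul' k A (TensorProduct.comm k A A (F.Δ u)) * x := by
  rw [z_eq F hsym u]
  have hL : ∀ t : A ⊗[k] A,
      x * LinearMap.mul' k A (TensorProduct.map (LinearMap.mulRight k u) LinearMap.id t)
        = LinearMap.mul' k A (TensorProduct.map (LinearMap.mulRight k u) LinearMap.id
            (TensorProduct.map (LinearMap.mulLeft k x) LinearMap.id t)) := by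
    intro t
    induction t using TensorProduct.induction_on with
    | zero => simp
    | tmul s t' => simp [LinearMap.mul'_apply, mul_assoc]
    | add s t hs ht => simp only [map_add, hs, ht, mul_add]
  have hR : ∀ t : A ⊗[k] A,
      LinearMap.mul' k A (TensorProduct.map (LinearMap.mulRight k u) LinearMap.id t) * x
        = LinearMap.mul' k A (TensorProduct.map (LinearMap.mulRight k u) LinearMap.id
            (TensorProduct.map LinearMap.id (LinearMap.mulRight k x) t)) := by
    intro t
    induction t using TensorProduct.induction_on with
    | zero => simp
    | tmul s t' => simp [LinearMap.mul'_apply, mul_assoc]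
    | add s t hs ht => simp only [map_add, hs, ht, add_mul]
  rw [hL, hR, casimir F x]

lemma window_central (x : A) : x * F.window = F.window * x := by
  have h1 := (mu_map_left x (F.Δ 1)).symm
  have h2 := mu_map_right x (F.Δ 1)
  rw [FrobeniusStr.window, h1, casimir F x, h2]

lemma inv_central (a' : A) (ha1 : F.window * a' = 1) (ha2 : a' * F.window = 1)
    (x : A) : x * a' = a' * x := by
  calc x * a' = (a' * F.window) * (x * a') := by rw [ha2, one_mul]
    _ = a' * ((F.window * x) * a') := by rw [mul_assoc, mul_assoc]
    _ = a' * ((x * F.window) * a') := by rw [window_central F x]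
    _ = a' * (x * (F.window * a')) := by rw [mul_assoc]
    _ = a' * x := by rw [ha1, mul_one]

lemma proj_central [FiniteDimensional k A] (hsym : ∀ u v : A, F.ε (u * v) = F.ε (v * u))
    (a' : A) (ha1 : F.window * a' = 1) (ha2 : a' * F.window = 1) (u x : A) :
    F.proj a' u * x = x * F.proj a' u := by
  rw [proj_apply]
  set m := LinearMap.mul' k A (TensorProduct.comm k A A (F.Δ u)) with hm
  calc a' * m * x = a' * (m * x) := by rw [mul_assoc]
    _ = a' * (x * m) := by rw [hm, ← z_central F hsym u x]
    _ = (a' * x) * m := by rw [mul_assoc]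
    _ = (x * a') * m := by rw [inv_central F a' ha1 ha2 x]
    _ = x * (a' * m) := by rw [mul_assoc]

lemma proj_of_central [FiniteDimensional k A] (hsym : ∀ u v : A, F.ε (u * v) = F.ε (v * u))
    (a' : A) (ha2 : a' * F.window = 1) (c : A) (hc : ∀ x : A, c * x = x * c) :
    F.proj a' c = c := by
  rw [proj_apply, delta_one_left F c, comm_map_left, cSymm F hsym]
  have h2 : ∀ t : A ⊗[k] A,
      LinearMap.mul' k A (TensorProduct.map LinearMap.id (LinearMap.mulLeft k c) t)
        = c * LinearMap.mul' k A t := by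
    intro t
    induction t using TensorProduct.induction_on with
    | zero => simp
    | tmul s t' =>
        simp only [TensorProduct.map_tmul, LinearMap.id_coe, id_eq,
          LinearMap.mulLeft_apply, LinearMap.mul'_apply]
        rw [← mul_assoc, ← hc s, mul_assoc]
    | add s t hs ht => simp only [map_add, hs, ht, mul_add]
  rw [h2, hc (LinearMap.mul' k A (F.Δ 1)), ← mul_assoc]
  have hw : LinearMap.mul' k A (F.Δ 1) = F.window := rfl
  rw [hw, ha2, one_mul]

lemma proj_idem [FiniteDimensional k A] (hsym : ∀ u v : A, F.ε (u * v) = F.ε (v * u))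
    (a' : A) (ha1 : F.window * a' = 1) (ha2 : a' * F.window = 1) (u : A) :
    F.proj a' (F.proj a' u) = F.proj a' u :=
  proj_of_central F hsym a' ha2 (F.proj a' u)
    (proj_central F hsym a' ha1 ha2 u)

lemma pow_inv (a' : A) (ha1 : F.window * a' = 1) (n : ℕ) :
    F.window ^ n * a' ^ n = 1 := by
  induction n with
  | zero => simp
  | succ n ih =>
      rw [pow_succ F.window, pow_succ' a', mul_assoc, ← mul_assoc F.window, ha1,
        one_mul, ih]

end FrobAux

end Aux

universe u

open CategoryTheory

/-- The iterated tensor power: `TP k A n` is `A^{⊗(n+1)}`, bracketed to the left. -/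
noncomputable def TP (k A : Type u) [Field k] [Ring A] [Algebra k A] : ℕ → ModuleCat.{u} k
  | 0 => ModuleCat.of k A
  | n + 1 => ModuleCat.of k ((TP k A n) ⊗[k] A)

/-- The iterated multiplication `μ^{(n+1)} : A^{⊗(n+1)} → A`,
`μ^{(1)} = id`, `μ^{(j+1)} = μ ∘ (μ^{(j)} ⊗ id)`. -/
noncomputable def muIter (k A : Type u) [Field k] [Ring A] [Algebra k A] :
    (n : ℕ) → (TP k A n →ₗ[k] A)
  | 0 => LinearMap.id
  | n + 1 => LinearMap.mul' k A ∘ₗ TensorProduct.map (muIter k A n) LinearMap.id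

/-- The iterated comultiplication `Δ^{(n+1)} : A → A^{⊗(n+1)}`,
`Δ^{(1)} = id`, `Δ^{(j+1)} = (Δ^{(j)} ⊗ id) ∘ Δ`. -/
noncomputable def deltaIter {k A : Type u} [Field k] [Ring A] [Algebra k A]
    (F : FrobeniusStr k A) : (n : ℕ) → (A →ₗ[k] TP k A n)
  | 0 => LinearMap.id
  | n + 1 => TensorProduct.map (deltaIter F n) LinearMap.id ∘ₗ F.Δ

/-- `P_{j+1,l+1} = Δ^{(j+1)} ∘ L_{(a')^j} ∘ μ^{(l+1)} : A^{⊗(l+1)} → A^{⊗(j+1)}`. -/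
noncomputable def Pmap {k A : Type u} [Field k] [Ring A] [Algebra k A]
    (F : FrobeniusStr k A) (a' : A) (j l : ℕ) : (TP k A l →ₗ[k] TP k A j) :=
  deltaIter F j ∘ₗ LinearMap.mulLeft k (a' ^ j) ∘ₗ muIter k A l

/-- `Q_{j+1,l+1} = Δ^{(j+1)} ∘ L_{(a')^j} ∘ p ∘ μ^{(l+1)} : A^{⊗(l+1)} → A^{⊗(j+1)}`. -/
noncomputable def Qmap {k A : Type u} [Field k] [Ring A] [Algebra k A]
    (F : FrobeniusStr k A) (a' : A) (j l : ℕ) : (TP k A l →ₗ[k] TP k A j) :=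
  deltaIter F j ∘ₗ LinearMap.mulLeft k (a' ^ j) ∘ₗ F.proj a' ∘ₗ muIter k A l

section Iter

variable {k A : Type u} [Field k] [Ring A] [Algebra k A] (F : FrobeniusStr k A)

lemma muIter_deltaIter_apply (n : ℕ) : ∀ x : A,
    muIter k A n (deltaIter F n x) = F.window ^ n * x := by
  induction n with
  | zero => intro x; rw [pow_zero, one_mul]; rfl
  | succ n ih =>
      intro x
      have key : ∀ t : A ⊗[k] A,
          LinearMap.mul' k A (TensorProduct.map (muIter k A n) LinearMap.id
            (TensorProduct.map (deltaIter F n) LinearMap.id t))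
          = LinearMap.mul' k A
              (TensorProduct.map (LinearMap.mulLeft k (F.window ^ n)) LinearMap.id t) := by
        intro t
        induction t using TensorProduct.induction_on with
        | zero => simp
        | tmul u v =>
            simp only [TensorProduct.map_tmul, LinearMap.id_coe, id_eq,
              LinearMap.mul'_apply, LinearMap.mulLeft_apply]
            rw [ih u]
        | add s t hs ht => simp only [map_add, hs, ht]
      show LinearMap.mul' k A (TensorProduct.map (muIter k A n) LinearMap.id
          (TensorProduct.map (deltaIter F n) LinearMap.id (F.Δ x))) = _
      rw [key, FrobAux.mu_map_left, FrobAux.mu_delta F x, pow_succ, mul_assoc]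

lemma Pcomp (a' : A) (ha1 : F.window * a' = 1) (j l m : ℕ) :
    Pmap F a' j l ∘ₗ Pmap F a' l m = Pmap F a' j m := by
  apply LinearMap.ext
  intro t
  simp only [Pmap, LinearMap.comp_apply, LinearMap.mulLeft_apply]
  rw [muIter_deltaIter_apply, ← mul_assoc (F.window ^ l), FrobAux.pow_inv F a' ha1 l,
    one_mul]

lemma Qcomp [FiniteDimensional k A] (hsym : ∀ u v : A, F.ε (u * v) = F.ε (v * u))
    (a' : A) (ha1 : F.window * a' = 1) (ha2 : a' * F.window = 1) (j l m : ℕ) :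
    Qmap F a' j l ∘ₗ Qmap F a' l m = Qmap F a' j m := by
  apply LinearMap.ext
  intro t
  simp only [Qmap, LinearMap.comp_apply, LinearMap.mulLeft_apply]
  rw [muIter_deltaIter_apply, ← mul_assoc (F.window ^ l), FrobAux.pow_inv F a' ha1 l,
    one_mul, FrobAux.proj_idem F hsym a' ha1 ha2]

lemma P00 (a' : A) : Pmap F a' 0 0 = LinearMap.id :=
  LinearMap.ext fun t => by simp [Pmap, muIter, deltaIter]; rfl

lemma Q00 (a' : A) : Qmap F a' 0 0 = F.proj a' :=
  LinearMap.ext fun t => by simp [Qmap, muIter, deltaIter]; rfl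

end Iter

/-- For a strongly separable symmetric Frobenius algebra, the maps
`P_{jl}` and `Q_{jl}` compose as `P_{jl} ∘ P_{lm} = P_{jm}` and `Q_{jl} ∘ Q_{lm} = Q_{jm}`;
in particular `P_{jj}` and `Q_{jj}` are idempotents, `P_{11} = id`, `Q_{11} = p`, and
`P_{1j}` (resp. `Q_{1j}`) restricts to an isomorphism `range P_{jj} ≅ A`
(resp. `range Q_{jj} ≅ range p`) with inverse the corestriction of `P_{j1}` (resp. `Q_{j1}`).
(Indices are shifted by one: `Pmap F a' j l` is the paper's `P_{j+1,l+1}`.) -/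
theorem statement2 {k A : Type u} [Field k] [Ring A] [Algebra k A] [FiniteDimensional k A]
    (F : FrobeniusStr k A)
    (hsym : ∀ u v : A, F.ε (u * v) = F.ε (v * u))
    (a' : A) (ha1 : F.window * a' = 1) (ha2 : a' * F.window = 1) :
    (∀ j l m : ℕ, Pmap F a' j l ∘ₗ Pmap F a' l m = Pmap F a' j m) ∧
    (∀ j l m : ℕ, Qmap F a' j l ∘ₗ Qmap F a' l m = Qmap F a' j m) ∧
    (∀ j : ℕ, Pmap F a' j j ∘ₗ Pmap F a' j j = Pmap F a' j j) ∧
    (∀ j : ℕ, Qmap F a' j j ∘ₗ Qmap F a' j j = Qmap F a' j j) ∧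
    Pmap F a' 0 0 = LinearMap.id ∧
    Qmap F a' 0 0 = F.proj a' ∧
    (∀ j : ℕ, Pmap F a' 0 j ∘ₗ Pmap F a' j 0 = LinearMap.id) ∧
    (∀ j : ℕ, Pmap F a' j 0 ∘ₗ Pmap F a' 0 j = Pmap F a' j j) ∧
    (∀ j : ℕ, Qmap F a' 0 j ∘ₗ Qmap F a' j 0 = F.proj a') ∧
    (∀ j : ℕ, Qmap F a' j 0 ∘ₗ Qmap F a' 0 j = Qmap F a' j j) := by
  refine ⟨Pcomp F a' ha1, Qcomp F hsym a' ha1 ha2,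
    fun j => Pcomp F a' ha1 j j j, fun j => Qcomp F hsym a' ha1 ha2 j j j,
    P00 F a', Q00 F a',
    fun j => (Pcomp F a' ha1 0 j 0).trans (P00 F a'),
    fun j => Pcomp F a' ha1 j 0 j,
    fun j => (Qcomp F hsym a' ha1 ha2 0 j 0).trans (Q00 F a'),
    fun j => Qcomp F hsym a' ha1 ha2 j 0 j⟩
end

section
/- Let (A, μ, η, Δ, ε) be a symmetric Frobenius algebra over a field k whose window element a := μ(Δ(1)) is invertible with two-sided inverse a', and let p := L_{a'} ∘ μ ∘ τ_{A,A} ∘ Δ, the idempotent projection onto the centre. Then the corestriction p̄ : A → range p is the coequalizer of μ : A ⊗ A → A and μ ∘ τ_{A,A} : A ⊗ A → A; that is, p(xy) = p(yx) for all x, y ∈ A, and for every k-vector space B and every k-linear map f : A → B satisfying f(xy) = f(yx) for all x, y ∈ A there exists a unique k-linear map φ : range p → B with φ ∘ p̄ = f. (This exhibits range p as the quotient A/[A, A].) -/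
open TensorProduct

section Aux

variable {k A : Type*} [Field k] [Ring A] [Algebra k A]

lemma aux_map_mu_assoc_symm (x : A) (t : A ⊗[k] A) :
    (TensorProduct.map (LinearMap.mul' k A) LinearMap.id)
      ((TensorProduct.assoc k A A A).symm (x ⊗ₜ t)) =
    TensorProduct.map (LinearMap.mulLeft k x) LinearMap.id t := by
  induction t using TensorProduct.induction_on with
  | zero => simp only [tmul_zero, LinearEquiv.map_zero, LinearMap.map_zero]
  | tmul a b => simp
  | add u v hu hv => simp [tmul_add, hu, hv]

lemma aux_map_mu_assoc (x : A) (t : A ⊗[k] A) :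
    (TensorProduct.map LinearMap.id (LinearMap.mul' k A))
      ((TensorProduct.assoc k A A A) (t ⊗ₜ x)) =
    TensorProduct.map LinearMap.id (LinearMap.mulRight k x) t := by
  induction t using TensorProduct.induction_on with
  | zero => simp only [zero_tmul, LinearEquiv.map_zero, LinearMap.map_zero]
  | tmul a b => simp
  | add u v hu hv => simp [add_tmul, hu, hv]

lemma aux_mu_map_left (x : A) (t : A ⊗[k] A) :
    LinearMap.mul' k A (TensorProduct.map (LinearMap.mulLeft k x) LinearMap.id t) =
      x * LinearMap.mul' k A t := by
  induction t using TensorProduct.induction_on with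
  | zero => simp
  | tmul a b => simp [mul_assoc]
  | add u v hu hv => simp [hu, hv, mul_add]

lemma aux_mu_map_right (x : A) (t : A ⊗[k] A) :
    LinearMap.mul' k A (TensorProduct.map LinearMap.id (LinearMap.mulRight k x) t) =
      LinearMap.mul' k A t * x := by
  induction t using TensorProduct.induction_on with
  | zero => simp
  | tmul a b => simp [mul_assoc]
  | add u v hu hv => simp [hu, hv, add_mul]

end Aux

section Frob

variable {k A : Type*} [Field k] [Ring A] [Algebra k A] (F : FrobeniusStr k A)

lemma delta_eq_right (x : A) :
    F.Δ x = TensorProduct.map LinearMap.id (LinearMap.mulRight k x) (F.Δ 1) := by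
  have h := F.frob_right 1 x
  rw [show (TensorProduct.map F.Δ LinearMap.id) ((1 : A) ⊗ₜ[k] x) = (F.Δ 1) ⊗ₜ x by simp,
    aux_map_mu_assoc, one_mul] at h
  exact h.symm

lemma delta_eq_left (x : A) :
    F.Δ x = TensorProduct.map (LinearMap.mulLeft k x) LinearMap.id (F.Δ 1) := by
  have h := F.frob_left x 1
  rw [show (TensorProduct.map LinearMap.id F.Δ) (x ⊗ₜ[k] (1 : A)) = x ⊗ₜ (F.Δ 1) by simp,
    aux_map_mu_assoc_symm, mul_one] at h
  exact h.symm

lemma delta_mul_eq (x y : A) :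
    F.Δ (x * y) =
      TensorProduct.map (LinearMap.mulLeft k x) (LinearMap.mulRight k y) (F.Δ 1) := by
  have h := F.frob_left x y
  rw [show (TensorProduct.map LinearMap.id F.Δ) (x ⊗ₜ[k] y) = x ⊗ₜ (F.Δ y) by simp,
    aux_map_mu_assoc_symm, delta_eq_right F y] at h
  rw [← h]
  generalize F.Δ 1 = t
  induction t using TensorProduct.induction_on with
  | zero => simp
  | tmul a b => simp
  | add u v hu hv => simp [hu, hv]

lemma window_central (x : A) : x * F.window = F.window * x := by
  unfold FrobeniusStr.window
  rw [← aux_mu_map_left, ← delta_eq_left, delta_eq_right, aux_mu_map_right]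

lemma inv_central (a' : A) (ha1 : F.window * a' = 1) (ha2 : a' * F.window = 1)
    (x : A) : a' * x = x * a' := by
  calc a' * x = a' * (x * (F.window * a')) := by rw [ha1, mul_one]
    _ = a' * ((x * F.window) * a') := by rw [mul_assoc]
    _ = a' * ((F.window * x) * a') := by rw [window_central]
    _ = (a' * F.window) * (x * a') := by rw [mul_assoc, mul_assoc]
    _ = x * a' := by rw [ha2, one_mul]

lemma T_cyc (x y : A) :
    LinearMap.mul' k A ((TensorProduct.comm k A A) (F.Δ (x * y))) =
      LinearMap.mul' k A ((TensorProduct.comm k A A) (F.Δ (y * x))) := by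
  rw [delta_mul_eq F x y, delta_eq_left F (y * x)]
  generalize F.Δ 1 = t
  induction t using TensorProduct.induction_on with
  | zero => simp
  | tmul a b => simp [mul_assoc]
  | add u v hu hv => simp [hu, hv]

lemma key_trace (a' : A) (ha1 : F.window * a' = 1) (ha2 : a' * F.window = 1)
    {B : Type*} [AddCommGroup B] [Module k B] (f : A →ₗ[k] B)
    (hf : ∀ x y : A, f (x * y) = f (y * x)) (x : A) :
    f (F.proj a' x) = f x := by
  have hcentral := inv_central F a' ha1 ha2
  have step1 : ∀ t : A ⊗[k] A,
      f (a' * LinearMap.mul' k A ((TensorProduct.comm k A A)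
          (TensorProduct.map (LinearMap.mulLeft k x) LinearMap.id t))) =
        f (LinearMap.mul' k A
          (TensorProduct.map LinearMap.id (LinearMap.mulLeft k a') t) * x) := by
    intro t
    induction t using TensorProduct.induction_on with
    | zero => simp
    | tmul e g =>
        simp only [TensorProduct.map_tmul, LinearMap.mulLeft_apply, LinearMap.id_coe, id_eq,
          TensorProduct.comm_tmul, LinearMap.mul'_apply]
        have h := hf (a' * (g * x)) e
        simp only [mul_assoc] at h ⊢
        exact h
    | add u v hu hv => simp [mul_add, add_mul, map_add, hu, hv]
  have step2 : LinearMap.mul' k A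
      (TensorProduct.map LinearMap.id (LinearMap.mulLeft k a') (F.Δ 1)) = 1 := by
    have : ∀ t : A ⊗[k] A, LinearMap.mul' k A
        (TensorProduct.map LinearMap.id (LinearMap.mulLeft k a') t) =
          a' * LinearMap.mul' k A t := by
      intro t
      induction t using TensorProduct.induction_on with
      | zero => simp
      | tmul e g => simp [← mul_assoc, hcentral e]
      | add u v hu hv => simp [hu, hv, mul_add]
    rw [this]
    exact ha2
  have hproj : F.proj a' x = a' * LinearMap.mul' k A ((TensorProduct.comm k A A)
      (TensorProduct.map (LinearMap.mulLeft k x) LinearMap.id (F.Δ 1))) := by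
    simp only [FrobeniusStr.proj, LinearMap.coe_comp, Function.comp_apply,
      LinearEquiv.coe_coe, LinearMap.mulLeft_apply, ← delta_eq_left]
  rw [hproj, step1, step2, one_mul]

end Frob

/-- For a strongly separable symmetric Frobenius algebra, the corestriction
of `p` to its range is the coequalizer of `μ` and `μ ∘ τ`, exhibiting `range p` as `A/[A,A]`. -/
theorem statement3 {k A : Type*} [Field k] [Ring A] [Algebra k A] [FiniteDimensional k A]
    (F : FrobeniusStr k A)
    (hsym : ∀ u v : A, F.ε (u * v) = F.ε (v * u))
    (a' : A) (ha1 : F.window * a' = 1) (ha2 : a' * F.window = 1) :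
    (∀ x y : A, F.proj a' (x * y) = F.proj a' (y * x)) ∧
      ∀ (B : Type*) [AddCommGroup B] [Module k B] (f : A →ₗ[k] B),
        (∀ x y : A, f (x * y) = f (y * x)) →
          ∃! φ : ↥(LinearMap.range (F.proj a')) →ₗ[k] B,
            φ ∘ₗ (F.proj a').rangeRestrict = f := by
  constructor
  · intro x y
    simp only [FrobeniusStr.proj, LinearMap.coe_comp, Function.comp_apply,
      LinearEquiv.coe_coe, LinearMap.mulLeft_apply]
    rw [T_cyc F x y]
  · intro B _ _ f hf
    refine ⟨f ∘ₗ (LinearMap.range (F.proj a')).subtype, ?_, ?_⟩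
    · apply LinearMap.ext
      intro x
      simp only [LinearMap.coe_comp, Function.comp_apply, Submodule.coe_subtype]
      have : ((LinearMap.range (F.proj a')).subtype ((F.proj a').rangeRestrict x)) =
          F.proj a' x := rfl
      rw [show (((F.proj a').rangeRestrict x : ↥(LinearMap.range (F.proj a'))) : A) =
        F.proj a' x from rfl]
      exact key_trace F a' ha1 ha2 f hf x
    · intro ψ hψ
      apply LinearMap.ext
      rintro ⟨w, hw⟩
      obtain ⟨x, rfl⟩ := hw
      have h1 : (⟨F.proj a' x, ⟨x, rfl⟩⟩ : ↥(LinearMap.range (F.proj a'))) =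
          (F.proj a').rangeRestrict x := rfl
      rw [h1]
      have := LinearMap.congr_fun hψ x
      simp only [LinearMap.coe_comp, Function.comp_apply] at this
      rw [this]
      simp only [LinearMap.coe_comp, Function.comp_apply, Submodule.coe_subtype]
      exact (key_trace F a' ha1 ha2 f hf x).symm
end

section
/- Let (A, μ, η, Δ, ε) be a symmetric Frobenius algebra over a field k whose window element a := μ(Δ(1)) is invertible with two-sided inverse a', and define P₂₂ := Δ ∘ L_{a'} ∘ μ : A ⊗ A → A ⊗ A. Then the corestriction P̄₂₂ : A ⊗ A → range P₂₂ is the coequalizer of μ ⊗ id_A and id_A ⊗ μ : A ⊗ A ⊗ A → A ⊗ A; that is, P₂₂ ∘ (μ ⊗ id_A) = P₂₂ ∘ (id_A ⊗ μ), and for every k-vector space B and every k-linear map f : A ⊗ A → B with f ∘ (μ ⊗ id_A) = f ∘ (id_A ⊗ μ) there exists a unique k-linear map φ : range P₂₂ → B with φ ∘ P̄₂₂ = f. (This exhibits range P₂₂ as the tensor product A ⊗_A A of A with itself over A, A being regarded as an (A, A)-bimodule.) -/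
open TensorProduct

/-- The map `P₂₂ = Δ ∘ L_{a'} ∘ μ : A ⊗ A → A ⊗ A`. -/
noncomputable def FrobeniusStr.P22 {k A : Type*} [Field k] [Ring A] [Algebra k A]
    (F : FrobeniusStr k A) (a' : A) : A ⊗[k] A →ₗ[k] A ⊗[k] A :=
  F.Δ ∘ₗ LinearMap.mulLeft k a' ∘ₗ LinearMap.mul' k A

/-- For a strongly separable symmetric Frobenius algebra, the corestriction of
`P₂₂ = Δ ∘ L_{a'} ∘ μ` to its range is the coequalizer of `μ ⊗ id` and `id ⊗ μ`, exhibiting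
`range P₂₂` as `A ⊗_A A`. -/
theorem statement4 {k A : Type*} [Field k] [Ring A] [Algebra k A] [FiniteDimensional k A]
    (F : FrobeniusStr k A)
    (hsym : ∀ u v : A, F.ε (u * v) = F.ε (v * u))
    (a' : A) (ha1 : F.window * a' = 1) (ha2 : a' * F.window = 1) :
    (∀ x y z : A, F.P22 a' ((x * y) ⊗ₜ z) = F.P22 a' (x ⊗ₜ (y * z))) ∧
      ∀ (B : Type*) [AddCommGroup B] [Module k B] (f : A ⊗[k] A →ₗ[k] B),
        (∀ x y z : A, f ((x * y) ⊗ₜ z) = f (x ⊗ₜ (y * z))) →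
          ∃! φ : ↥(LinearMap.range (F.P22 a')) →ₗ[k] B,
            φ ∘ₗ (F.P22 a').rangeRestrict = f := by
  -- Δ(u) in terms of Δ(1)
  have hΔ1 : ∀ u : A, F.Δ u = (TensorProduct.map (LinearMap.mul' k A) LinearMap.id)
      ((TensorProduct.assoc k A A A).symm (u ⊗ₜ F.Δ 1)) := by
    intro u
    have h := F.frob_left u 1
    rw [mul_one] at h
    rw [← h]
    simp
  have hΔ2 : ∀ u : A, F.Δ u = (TensorProduct.map LinearMap.id (LinearMap.mul' k A))
      ((TensorProduct.assoc k A A A) (F.Δ 1 ⊗ₜ u)) := by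
    intro u
    have h := F.frob_right 1 u
    rw [one_mul] at h
    rw [← h]
    simp
  have key1 : ∀ (u : A) (w : A ⊗[k] A),
      LinearMap.mul' k A ((TensorProduct.map (LinearMap.mul' k A) LinearMap.id)
        ((TensorProduct.assoc k A A A).symm (u ⊗ₜ w))) = u * LinearMap.mul' k A w := by
    intro u w
    induction w using TensorProduct.induction_on with
    | zero => simp only [tmul_zero, LinearEquiv.map_zero, LinearMap.map_zero, mul_zero]
    | tmul p q => simp [mul_assoc]
    | add w1 w2 h1 h2 => simp only [tmul_add, map_add, h1, h2, mul_add]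
  have key2 : ∀ (v : A) (w : A ⊗[k] A),
      LinearMap.mul' k A ((TensorProduct.map LinearMap.id (LinearMap.mul' k A))
        ((TensorProduct.assoc k A A A) (w ⊗ₜ v))) = LinearMap.mul' k A w * v := by
    intro v w
    induction w using TensorProduct.induction_on with
    | zero => simp only [zero_tmul, LinearEquiv.map_zero, LinearMap.map_zero, zero_mul]
    | tmul p q => simp [mul_assoc]
    | add w1 w2 h1 h2 => simp only [add_tmul, map_add, h1, h2, add_mul]
  -- the window element is central
  have hmulΔ1 : ∀ u : A, LinearMap.mul' k A (F.Δ u) = u * F.window := by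
    intro u; rw [hΔ1 u, key1]; rfl
  have hmulΔ2 : ∀ u : A, LinearMap.mul' k A (F.Δ u) = F.window * u := by
    intro u; rw [hΔ2 u, key2]; rfl
  have hcent : ∀ u : A, u * F.window = F.window * u := by
    intro u; rw [← hmulΔ1, ← hmulΔ2]
  constructor
  · intro x y z
    simp [FrobeniusStr.P22, LinearMap.mul'_apply, mul_assoc]
  · intro B _ _ f hf
    have hg : ∀ x y : A, f (x ⊗ₜ y) = f ((x * y) ⊗ₜ 1) := by
      intro x y
      have := hf x y 1
      rw [mul_one] at this
      exact this.symm
    -- f ∘ Δ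
    have hfΔaux : ∀ (u : A) (w : A ⊗[k] A),
        f ((TensorProduct.map (LinearMap.mul' k A) LinearMap.id)
          ((TensorProduct.assoc k A A A).symm (u ⊗ₜ w))) =
        f ((u * LinearMap.mul' k A w) ⊗ₜ 1) := by
      intro u w
      induction w using TensorProduct.induction_on with
      | zero => simp only [tmul_zero, LinearEquiv.map_zero, LinearMap.map_zero, mul_zero,
          zero_tmul]
      | tmul p q =>
        simp only [TensorProduct.assoc_symm_tmul, TensorProduct.map_tmul,
          LinearMap.mul'_apply, LinearMap.id_coe, id_eq]
        rw [hg, mul_assoc]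
      | add w1 w2 h1 h2 =>
        simp only [tmul_add, map_add, h1, h2, mul_add, add_tmul]
    have hfΔ : ∀ u : A, f (F.Δ u) = f ((u * F.window) ⊗ₜ 1) := by
      intro u; rw [hΔ1 u, hfΔaux]; rfl
    have hfP : ∀ w : A ⊗[k] A, f (F.P22 a' w) = f w := by
      have hext : f ∘ₗ F.P22 a' = f := by
        apply TensorProduct.ext'
        intro x y
        simp only [LinearMap.comp_apply, FrobeniusStr.P22, LinearMap.mul'_apply,
          LinearMap.mulLeft_apply]
        rw [hfΔ, mul_assoc, hcent, ← mul_assoc, ← mul_assoc, ha2, one_mul, ← hg]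
      intro w
      exact congrArg (· w) hext |>.trans rfl |>.symm ▸ (LinearMap.ext_iff.mp hext w)
    have hsurj := LinearMap.surjective_rangeRestrict (F.P22 a')
    refine ⟨f ∘ₗ (LinearMap.range (F.P22 a')).subtype, ?_, ?_⟩
    · apply LinearMap.ext
      intro w
      simpa using hfP w
    · intro φ hφ
      apply LinearMap.ext
      intro x
      obtain ⟨w, rfl⟩ := hsurj x
      have h1 := LinearMap.ext_iff.mp hφ w
      simp only [LinearMap.comp_apply] at h1 ⊢
      rw [h1]
      simpa using (hfP w).symm
end

section
/- Let k be a field and A a unital associative k-algebra which is strongly separable, i.e. the canonical bilinear form g_can : A × A → k, g_can(a, b) := tr(L_a ∘ L_b), is nondegenerate. Then A is finite-dimensional over k and A is a semisimple ring. -/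
/-- A strongly separable algebra over a field (one whose canonical bilinear form
`g_can(a,b) = tr(L_a ∘ L_b)` is nondegenerate) is finite-dimensional and semisimple. -/
theorem statement5 (k A : Type*) [Field k] [Ring A] [Algebra k A]
    (hnd : ∀ a : A, (∀ b : A,
        LinearMap.trace k A (LinearMap.mulLeft k a ∘ₗ LinearMap.mulLeft k b) = 0) → a = 0) :
    FiniteDimensional k A ∧ IsSemisimpleRing A := by
  have hcomp : ∀ a b : A, LinearMap.mulLeft k a ∘ₗ LinearMap.mulLeft k b
      = LinearMap.mulLeft k (a * b) := fun a b => LinearMap.ext fun x => (mul_assoc a b x).symm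
  -- Part 1: finite-dimensionality
  have hfin : FiniteDimensional k A := by
    by_contra hf
    have h0 : LinearMap.trace k A = 0 := by
      rw [LinearMap.trace, dif_neg]
      rintro ⟨s, ⟨b⟩⟩
      exact hf (Module.Finite.of_basis b)
    have h1 : (1 : A) = 0 := hnd 1 (fun b => by rw [h0]; rfl)
    have : Subsingleton A := subsingleton_of_zero_eq_one h1.symm
    exact hf inferInstance
  haveI := hfin
  haveI : IsArtinianRing A := IsArtinianRing.of_finite k A
  haveI : IsAtomic (Submodule A A) :=
    isAtomic_of_orderBot_wellFounded_lt (IsWellFounded.wf)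
  -- trace of a square-zero element's left multiplication vanishes
  have htr0 : ∀ c : A, c * c = 0 → LinearMap.trace k A (LinearMap.mulLeft k c) = 0 := by
    intro c hc
    have hnil : IsNilpotent (LinearMap.mulLeft k c) :=
      ⟨2, by rw [LinearMap.pow_mulLeft, pow_two, hc, LinearMap.mulLeft_zero_eq_zero]⟩
    exact (LinearMap.isNilpotent_trace_of_isNilpotent hnil).eq_zero
  -- a left ideal with zero square is zero
  have hsq : ∀ I : Submodule A A, (∀ x ∈ I, ∀ y ∈ I, x * y = 0) → I = ⊥ := by
    intro I hI2
    rw [eq_bot_iff]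
    intro a ha
    rw [Submodule.mem_bot]
    refine hnd a (fun b => ?_)
    rw [hcomp]
    apply htr0
    have hba : b * a ∈ I := by simpa [smul_eq_mul] using I.smul_mem b ha
    have h1 : a * (b * a) = 0 := hI2 a ha _ hba
    rw [mul_assoc a b (a * b), ← mul_assoc b a b, ← mul_assoc a (b * a) b, h1, zero_mul]
  -- every atom (minimal left ideal) contains a nonzero idempotent
  have hatom : ∀ I : Submodule A A, IsAtom I → ∃ e : A, e ∈ I ∧ e * e = e ∧ e ≠ 0 := by
    intro I hI
    have hns : ¬ ∀ x ∈ I, ∀ y ∈ I, x * y = 0 := fun h => hI.1 (hsq I h)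
    push_neg at hns
    obtain ⟨x, hx, y, hy, hxy⟩ := hns
    set φ : A →ₗ[A] A := LinearMap.toSpanSingleton A A y with hφ
    have hφapp : ∀ z : A, φ z = z * y := fun z => by
      simp [hφ, LinearMap.toSpanSingleton_apply, smul_eq_mul]
    have hle : Submodule.map φ I ≤ I := by
      rintro _ ⟨z, hz, rfl⟩
      rw [hφapp]
      simpa [smul_eq_mul] using I.smul_mem z hy
    have hne : Submodule.map φ I ≠ ⊥ := by
      intro h
      apply hxy
      have hxm : φ x ∈ Submodule.map φ I := Submodule.mem_map_of_mem hx
      rw [h, Submodule.mem_bot] at hxm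
      rwa [hφapp] at hxm
    have hmap : Submodule.map φ I = I := (hI.le_iff.mp hle).resolve_left hne
    have hymem : y ∈ Submodule.map φ I := hmap.symm ▸ hy
    obtain ⟨e, heI, hey⟩ := hymem
    rw [hφapp] at hey
    have hy0 : y ≠ 0 := fun h => hxy (by rw [h, mul_zero])
    have hker : ∀ z ∈ I, z * y = 0 → z = 0 := by
      intro z hz hzy
      have hIk : I ⊓ LinearMap.ker φ = ⊥ := by
        rcases hI.le_iff.mp (inf_le_left : I ⊓ LinearMap.ker φ ≤ I) with h | h
        · exact h
        · exfalso
          apply hxy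
          have hxk : x ∈ LinearMap.ker φ := inf_eq_left.mp h hx
          rw [LinearMap.mem_ker, hφapp] at hxk
          exact hxk
      have : z ∈ I ⊓ LinearMap.ker φ :=
        Submodule.mem_inf.mpr ⟨hz, by rw [LinearMap.mem_ker, hφapp]; exact hzy⟩
      rwa [hIk, Submodule.mem_bot] at this
    have hee : e * e = e := by
      have hmem : e * e - e ∈ I := by
        refine Submodule.sub_mem I ?_ heI
        simpa [smul_eq_mul] using I.smul_mem e heI
      have hzero : (e * e - e) * y = 0 := by
        rw [sub_mul, mul_assoc, hey, hey, sub_self]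
      have := hker _ hmem hzero
      rwa [sub_eq_zero] at this
    refine ⟨e, heI, hee, fun h => hy0 ?_⟩
    rw [← hey, h, zero_mul]
  -- the socle is everything
  set S : Submodule A A := sSup {m : Submodule A A | IsSimpleModule A m} with hSdef
  have hS : ∀ L : Submodule A A, L ≤ S := by
    intro L
    induction L using WellFoundedLT.induction with
    | ind L IH =>
      rcases eq_or_ne L ⊥ with rfl | hL
      · exact bot_le
      · obtain ⟨I, hIa, hIL⟩ := (IsAtomic.eq_bot_or_exists_atom_le L).resolve_left hL
        obtain ⟨e, heI, hee, he0⟩ := hatom I hIa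
        set ψ : A →ₗ[A] A := LinearMap.toSpanSingleton A A e with hψ
        have hψapp : ∀ z : A, ψ z = z * e := fun z => by
          simp [hψ, LinearMap.toSpanSingleton_apply, smul_eq_mul]
        set L' := L ⊓ LinearMap.ker ψ with hL'
        have hlt : L' < L := by
          refine lt_of_le_of_ne inf_le_left (fun h => ?_)
          have heL' : e ∈ L' := h.symm ▸ hIL heI
          have : e * e = 0 := by
            have := (Submodule.mem_inf.mp heL').2
            rwa [LinearMap.mem_ker, hψapp] at this
          exact he0 (by rw [← hee, this])
        have hI_le_S : I ≤ S := le_sSup (isSimpleModule_iff_isAtom.mpr hIa)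
        have hL'S : L' ≤ S := IH L' hlt
        intro a ha
        have hae : a * e ∈ I := by simpa [smul_eq_mul] using I.smul_mem a heI
        have h1 : a * e ∈ S := hI_le_S hae
        have h2 : a - a * e ∈ S := by
          refine hL'S (Submodule.mem_inf.mpr ⟨Submodule.sub_mem L ha (hIL hae), ?_⟩)
          rw [LinearMap.mem_ker, hψapp, sub_mul, mul_assoc, hee, sub_self]
        have := S.add_mem h1 h2
        rwa [add_sub_cancel] at this
  have hss : IsSemisimpleRing A :=
    IsSemisimpleModule.of_sSup_simples_eq_top (le_antisymm le_top (hS ⊤))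
  exact ⟨hfin, hss⟩
end

section
/- Let (A, μ, η, Δ, ε) be a symmetric Frobenius algebra over a field k with window element a := μ(Δ(1)). Then the canonical bilinear form g_can(x, y) := tr(L_x ∘ L_y) on A is nondegenerate if and only if a is invertible in A, i.e. there exists a' ∈ A with a·a' = 1 = a'·a. -/
open TensorProduct

section Aux
variable {k A : Type*} [Field k] [Ring A] [Algebra k A]

lemma frob1 (F : FrobeniusStr k A) (u : A) :
    F.Δ u = TensorProduct.map (LinearMap.mulLeft k u) LinearMap.id (F.Δ 1) := by
  have h := F.frob_left u 1
  rw [mul_one] at h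
  rw [← h]
  simp only [map_tmul, LinearMap.id_coe, id_eq]
  generalize F.Δ 1 = t
  induction t with
  | zero => simp [LinearEquiv.map_zero]
  | tmul v w => simp [assoc_symm_tmul]
  | add s t hs ht =>
      simp only [tmul_add, LinearEquiv.map_add, map_add, hs, ht]

lemma frob2 (F : FrobeniusStr k A) (v : A) :
    F.Δ v = TensorProduct.map LinearMap.id (LinearMap.mulRight k v) (F.Δ 1) := by
  have h := F.frob_right 1 v
  rw [one_mul] at h
  rw [← h]
  simp only [map_tmul, LinearMap.id_coe, id_eq]
  generalize F.Δ 1 = t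
  induction t with
  | zero => simp [LinearEquiv.map_zero]
  | tmul a b => simp [assoc_tmul]
  | add s t hs ht => simp only [add_tmul, LinearEquiv.map_add, map_add, hs, ht]

noncomputable def phiL' (ε : A →ₗ[k] k) : A →ₗ[k] Module.Dual k A where
  toFun u := ε ∘ₗ LinearMap.mulLeft k u
  map_add' u v := by ext w; simp [add_mul]
  map_smul' c u := by ext w; simp [smul_mul_assoc]

noncomputable def phiR' (ε : A →ₗ[k] k) : A →ₗ[k] Module.Dual k A where
  toFun u := ε ∘ₗ LinearMap.mulRight k u
  map_add' u v := by ext w; simp [mul_add]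
  map_smul' c u := by ext w; simp [mul_smul_comm]

@[simp] lemma phiL'_apply (ε : A →ₗ[k] k) (u w : A) : phiL' ε u w = ε (u * w) := rfl
@[simp] lemma phiR'_apply (ε : A →ₗ[k] k) (u w : A) : phiR' ε u w = ε (w * u) := rfl

/-- `id = Σ (w ↦ ε(w e_i) • f_i)`. -/
lemma reprR (F : FrobeniusStr k A) :
    dualTensorHom k A A (TensorProduct.map (phiR' F.ε) LinearMap.id (F.Δ 1)) = LinearMap.id := by
  apply LinearMap.ext; intro w
  have key : ∀ t : A ⊗[k] A,
      dualTensorHom k A A (TensorProduct.map (phiR' F.ε) LinearMap.id t) w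
        = (TensorProduct.lid k A)
            (TensorProduct.map F.ε LinearMap.id
              (TensorProduct.map (LinearMap.mulLeft k w) LinearMap.id t)) := by
    intro t; induction t with
    | zero => simp
    | tmul u v => simp
    | add s t hs ht =>
        simp only [map_add, LinearEquiv.map_add, LinearMap.add_apply, hs, ht]
  rw [LinearMap.id_apply, key, ← frob1 F w]
  exact F.counit_left w

/-- `id = Σ (w ↦ ε(f_i w) • e_i)`. -/
lemma reprL (F : FrobeniusStr k A) :
    dualTensorHom k A A
      (TensorProduct.map (phiL' F.ε) LinearMap.id ((TensorProduct.comm k A A) (F.Δ 1)))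
      = LinearMap.id := by
  apply LinearMap.ext; intro w
  have key : ∀ t : A ⊗[k] A,
      dualTensorHom k A A
          (TensorProduct.map (phiL' F.ε) LinearMap.id ((TensorProduct.comm k A A) t)) w
        = (TensorProduct.rid k A)
            (TensorProduct.map LinearMap.id F.ε
              (TensorProduct.map LinearMap.id (LinearMap.mulRight k w) t)) := by
    intro t; induction t with
    | zero => simp
    | tmul u v => simp
    | add s t hs ht =>
        simp only [map_add, LinearEquiv.map_add, LinearMap.add_apply, hs, ht]
  rw [LinearMap.id_apply, key, ← frob2 F w]
  exact F.counit_right w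

lemma eps_nondeg (F : FrobeniusStr k A) (z : A) (hz : ∀ w : A, F.ε (z * w) = 0) : z = 0 := by
  have h := LinearMap.congr_fun (reprR F) z
  have key : ∀ t : A ⊗[k] A,
      dualTensorHom k A A (TensorProduct.map (phiR' F.ε) LinearMap.id t) z = 0 := by
    intro t; induction t with
    | zero => simp
    | tmul u v => simp [hz u]
    | add s t hs ht => simp only [map_add, LinearMap.add_apply, hs, ht, add_zero]
  rw [key] at h
  exact h.symm

lemma trace_mulLeft_eq [FiniteDimensional k A] (F : FrobeniusStr k A)
    (hsym : ∀ u v : A, F.ε (u * v) = F.ε (v * u)) (x : A) :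
    LinearMap.trace k A (LinearMap.mulLeft k x) = F.ε (x * LinearMap.mul' k A (F.Δ 1)) := by
  have hrep : LinearMap.mulLeft k x =
      dualTensorHom k A A
        (TensorProduct.map (phiL' F.ε) (LinearMap.mulLeft k x)
          ((TensorProduct.comm k A A) (F.Δ 1))) := by
    conv_lhs => rw [← LinearMap.comp_id (LinearMap.mulLeft k x), ← reprL F]
    generalize (TensorProduct.comm k A A) (F.Δ 1) = t
    apply LinearMap.ext; intro w
    induction t with
    | zero => simp
    | tmul u v => simp [mul_smul_comm]
    | add s t hs ht =>
        simp only [map_add, LinearMap.add_apply, LinearMap.comp_apply,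
          LinearMap.mulLeft_apply, mul_add] at hs ht ⊢
        rw [hs, ht]
  rw [hrep, LinearMap.trace_eq_contract_apply]
  have key : ∀ t : A ⊗[k] A,
      contractLeft k A
          (TensorProduct.map (phiL' F.ε) (LinearMap.mulLeft k x)
            ((TensorProduct.comm k A A) t))
        = F.ε (x * LinearMap.mul' k A t) := by
    intro t; induction t with
    | zero => simp
    | tmul u v =>
        simp only [comm_tmul, map_tmul, contractLeft_apply, phiL'_apply,
          LinearMap.mulLeft_apply, LinearMap.mul'_apply]
        rw [hsym v (x * u), mul_assoc]
    | add s t hs ht =>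
        simp only [LinearEquiv.map_add, map_add, hs, ht, mul_add]
  rw [key]

end Aux

/-- For a symmetric Frobenius algebra, the canonical bilinear form
`g_can(x,y) = tr(L_x ∘ L_y)` is nondegenerate if and only if the window element is invertible. -/
theorem statement6 {k A : Type*} [Field k] [Ring A] [Algebra k A] [FiniteDimensional k A]
    (F : FrobeniusStr k A)
    (hsym : ∀ u v : A, F.ε (u * v) = F.ε (v * u)) :
    (∀ x : A, (∀ y : A,
        LinearMap.trace k A (LinearMap.mulLeft k x ∘ₗ LinearMap.mulLeft k y) = 0) → x = 0)
      ↔ ∃ a' : A, F.window * a' = 1 ∧ a' * F.window = 1 := by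
  set a := F.window with ha
  have haa : a = LinearMap.mul' k A (F.Δ 1) := rfl
  have gform : ∀ x y : A,
      LinearMap.trace k A (LinearMap.mulLeft k x ∘ₗ LinearMap.mulLeft k y)
        = F.ε (x * y * a) := by
    intro x y
    rw [← LinearMap.mulLeft_mul, trace_mulLeft_eq F hsym, haa]
  constructor
  · intro hnd
    have hinj : Function.Injective (LinearMap.mulLeft k a) := by
      rw [← LinearMap.ker_eq_bot, LinearMap.ker_eq_bot']
      intro x hx
      simp only [LinearMap.mulLeft_apply] at hx
      apply hnd
      intro y
      rw [gform, hsym (x * y) a, ← mul_assoc, hx, zero_mul, map_zero]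
    have hsurj := LinearMap.injective_iff_surjective.mp hinj
    obtain ⟨a', ha1⟩ := hsurj 1
    simp only [LinearMap.mulLeft_apply] at ha1
    refine ⟨a', ha1, ?_⟩
    have hcomp : LinearMap.mulLeft k a ∘ₗ LinearMap.mulLeft k a' = LinearMap.id := by
      rw [← LinearMap.mulLeft_mul, ha1]
      ext w; simp
    have hinj' : Function.Injective (LinearMap.mulLeft k a') := by
      have h2 : Function.Injective
          (⇑(LinearMap.mulLeft k a) ∘ ⇑(LinearMap.mulLeft k a')) := by
        rw [← LinearMap.coe_comp, hcomp]
        exact fun u v h => h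
      exact h2.of_comp
    obtain ⟨a'', ha2⟩ := LinearMap.injective_iff_surjective.mp hinj' 1
    simp only [LinearMap.mulLeft_apply] at ha2
    have heq : a'' = a := by
      calc a'' = 1 * a'' := (one_mul _).symm
        _ = a * a' * a'' := by rw [ha1]
        _ = a * (a' * a'') := mul_assoc _ _ _
        _ = a := by rw [ha2, mul_one]
    rw [heq] at ha2
    exact ha2
  · rintro ⟨a', h1, h2⟩ x hx
    apply eps_nondeg F
    intro w
    have hy := hx (w * a')
    rw [gform] at hy
    have hw : x * (w * a') * a = x * w := by
      rw [mul_assoc x (w * a') a, mul_assoc w a' a, h2, mul_one]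
    rw [hw] at hy
    exact hy
end

section
/- Let k be a field and A a nontrivial unital associative k-algebra which is strongly separable (the canonical bilinear form g_can(a, b) := tr(L_a ∘ L_b) is nondegenerate) and central over k (its centre equals k·1). Then A is a Brauer algebra: A is finite-dimensional over k and A is a simple ring. -/
open LinearMap Module

section aux
variable (k A : Type*) [Field k] [Ring A] [Algebra k A]

/-- The canonical trace form of an algebra. -/
noncomputable def gcanForm : LinearMap.BilinForm k A :=
  LinearMap.mk₂ k
    (fun a b => LinearMap.trace k A (LinearMap.mulLeft k a ∘ₗ LinearMap.mulLeft k b))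
    (fun a a' b => by
      beta_reduce
      have : mulLeft k (a + a') = mulLeft k a + mulLeft k a' := by ext; simp [add_mul]
      rw [this, add_comp, map_add])
    (fun c a b => by
      beta_reduce
      have : mulLeft k (c • a) = c • mulLeft k a := by ext; simp [smul_mul_assoc]
      rw [this, smul_comp, map_smul])
    (fun a b b' => by
      beta_reduce
      have : mulLeft k (b + b') = mulLeft k b + mulLeft k b' := by ext; simp [add_mul]
      rw [this, comp_add, map_add])
    (fun c a b => by
      beta_reduce
      have : mulLeft k (c • b) = c • mulLeft k b := by ext; simp [smul_mul_assoc]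
      rw [this, comp_smul, map_smul])

@[simp] lemma gcanForm_apply (a b : A) :
    gcanForm k A a b = LinearMap.trace k A (LinearMap.mulLeft k a ∘ₗ LinearMap.mulLeft k b) := rfl

lemma gcanForm_symm (a b : A) : gcanForm k A a b = gcanForm k A b a := by
  simp only [gcanForm_apply, ← Module.End.mul_eq_comp]
  exact LinearMap.trace_mul_comm k _ _

lemma gcanForm_assoc (a b c : A) : gcanForm k A (a * b) c = gcanForm k A a (b * c) := by
  simp only [gcanForm_apply, mulLeft_mul, comp_assoc]

variable {k A}

lemma fd_of_nd [Nontrivial A]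
    (hnd : ∀ a : A, (∀ b : A,
        LinearMap.trace k A (LinearMap.mulLeft k a ∘ₗ LinearMap.mulLeft k b) = 0) → a = 0) :
    FiniteDimensional k A := by
  by_contra hinf
  have htr : LinearMap.trace k A = 0 := by
    rw [LinearMap.trace, dif_neg]
    rintro ⟨s, ⟨b⟩⟩
    exact hinf (Module.Finite.of_basis b)
  exact one_ne_zero (hnd 1 fun b => by rw [htr]; rfl)

end aux

/-- A nontrivial strongly separable central algebra over a field is a Brauer
algebra, i.e. finite-dimensional and simple. -/
theorem statement7 (k A : Type*) [Field k] [Ring A] [Algebra k A] [Nontrivial A]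
    (hnd : ∀ a : A, (∀ b : A,
        LinearMap.trace k A (LinearMap.mulLeft k a ∘ₗ LinearMap.mulLeft k b) = 0) → a = 0)
    (hcentral : Subalgebra.center k A = ⊥) :
    FiniteDimensional k A ∧ IsSimpleRing A := by
  have hfin : FiniteDimensional k A := fd_of_nd hnd
  refine ⟨hfin, ?_⟩
  set B := gcanForm k A with hBdef
  have hnd' : ∀ a : A, (∀ b : A, B a b = 0) → a = 0 := fun a h => hnd a h
  have hsymm : ∀ x y : A, B x y = B y x := gcanForm_symm k A
  have hrefl : B.IsRefl := fun x y h => by rw [hsymm]; exact h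
  have hB : B.Nondegenerate := ⟨fun x hx => hnd' x hx, fun y hy => hnd' y fun b => by rw [hsymm]; exact hy b⟩
  have hassoc : ∀ x y z : A, B (x * y) z = B x (y * z) := gcanForm_assoc k A
  have hbotne : (⊥ : TwoSidedIdeal A) ≠ ⊤ := by
    intro h
    have h1 : (1 : A) ∈ (⊥ : TwoSidedIdeal A) := h ▸ TwoSidedIdeal.mem_top _
    exact one_ne_zero ((TwoSidedIdeal.mem_bot _).mp h1)
  haveI : Nontrivial (TwoSidedIdeal A) := nontrivial_of_ne ⊥ ⊤ hbotne
  refine ⟨⟨fun I => ?_⟩⟩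
  -- the ideal as a k-submodule
  set S : Submodule k A :=
    { carrier := I
      add_mem' := I.add_mem
      zero_mem' := I.zero_mem
      smul_mem' := fun c x hx => by
        rw [Algebra.smul_def]; exact I.mul_mem_left _ _ hx } with hSdef
  have hmemS : ∀ x : A, x ∈ S ↔ x ∈ I := fun _ => Iff.rfl
  set W := B.orthogonal S with hWdef
  have hmemW : ∀ x : A, x ∈ W ↔ ∀ s ∈ S, B s x = 0 := fun x => Iff.rfl
  -- W is a two-sided ideal
  have hWr : ∀ w ∈ W, ∀ a : A, w * a ∈ W := by
    intro w hw a s hs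
    show B s (w * a) = 0
    rw [hsymm, hassoc, hsymm]
    exact hw _ ((hmemS _).mpr (I.mul_mem_left a s ((hmemS _).mp hs)))
  have hWl : ∀ w ∈ W, ∀ a : A, a * w ∈ W := by
    intro w hw a s hs
    show B s (a * w) = 0
    rw [← hassoc]
    exact hw _ ((hmemS _).mpr (I.mul_mem_right s a ((hmemS _).mp hs)))
  -- products between the ideal and its orthogonal vanish
  have hSW : ∀ s ∈ S, ∀ w ∈ W, s * w = 0 := by
    intro s hs w hw
    refine hnd' _ fun b => ?_
    rw [hassoc]
    exact hWr w hw b s hs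
  have hWS : ∀ w ∈ W, ∀ s ∈ S, w * s = 0 := by
    intro w hw s hs
    refine hnd' _ fun b => ?_
    rw [hassoc, hsymm]
    exact hw _ ((hmemS _).mpr (I.mul_mem_right s b ((hmemS _).mp hs)))
  -- S ⊓ W = ⊥
  have hinfSW : S ⊓ W = ⊥ := by
    rw [Submodule.eq_bot_iff]
    rintro x ⟨hxS, hxW⟩
    refine hnd' x fun b => ?_
    have hx2 : (x * b) * x = 0 := hSW _ ((hmemS _).mpr (I.mul_mem_right x b ((hmemS _).mp hxS))) x hxW
    have hsq : (mulLeft k x ∘ₗ mulLeft k b) ∘ₗ (mulLeft k x ∘ₗ mulLeft k b) = 0 := by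
      have : mulLeft k x ∘ₗ mulLeft k b ∘ₗ mulLeft k x ∘ₗ mulLeft k b
          = mulLeft k (x * (b * (x * b))) := by
        simp [mulLeft_mul, comp_assoc]
      rw [comp_assoc, this]
      have : x * (b * (x * b)) = 0 := by
        rw [show x * (b * (x * b)) = ((x * b) * x) * b by rw [mul_assoc, mul_assoc], hx2,
          zero_mul]
      rw [this, mulLeft_zero_eq_zero]
    have hnil : IsNilpotent (mulLeft k x ∘ₗ mulLeft k b) := ⟨2, by
      rw [pow_two, Module.End.mul_eq_comp, hsq]⟩
    have := LinearMap.isNilpotent_trace_of_isNilpotent hnil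
    exact this.eq_zero
  -- dimension count
  have hdim : finrank k S + finrank k W = finrank k A := by
    have h := LinearMap.BilinForm.finrank_add_finrank_orthogonal hrefl (B := B) S
    rwa [LinearMap.BilinForm.orthogonal_top_eq_bot hB, inf_bot_eq, finrank_bot, add_zero] at h
  have hsup : S ⊔ W = ⊤ := by
    apply Submodule.eq_top_of_finrank_eq
    have h := Submodule.finrank_sup_add_finrank_inf_eq S W
    rw [hinfSW, finrank_bot, add_zero] at h
    omega
  -- decompose 1
  obtain ⟨e, he, f, hf, hef⟩ := Submodule.mem_sup.mp (hsup ▸ Submodule.mem_top (x := (1 : A)))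
  have hfe : f = 1 - e := by rw [← hef]; abel
  -- e is central
  have hcent : e ∈ Subalgebra.center k A := by
    refine Subalgebra.mem_center_iff.mpr fun a => ?_
    have h1 : a * e - e * a ∈ S := S.sub_mem
      ((hmemS _).mpr (I.mul_mem_left a e ((hmemS _).mp he)))
      ((hmemS _).mpr (I.mul_mem_right e a ((hmemS _).mp he)))
    have h2 : a * e - e * a = f * a - a * f := by
      rw [hfe]; noncomm_ring
    have h3 : a * e - e * a ∈ W := by
      rw [h2]; exact W.sub_mem (hWr f hf a) (hWl f hf a)
    have : a * e - e * a = 0 := by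
      have := hinfSW ▸ (Submodule.mem_inf.mpr ⟨h1, h3⟩)
      simpa using this
    linear_combination (norm := noncomm_ring) this
  rw [hcentral] at hcent
  obtain ⟨lam, hlam⟩ := Algebra.mem_bot.mp hcent
  have hee : e * e = e := by
    have h0 : e * f = 0 := hSW e he f hf
    calc e * e = e * e + e * f := by rw [h0, add_zero]
      _ = e * (e + f) := by rw [mul_add]
      _ = e := by rw [hef, mul_one]
  have hlam2 : lam * lam = lam := by
    have hinj : Function.Injective (algebraMap k A) := RingHom.injective _
    apply hinj
    rw [map_mul, hlam, hee]
  have hl01 : lam = 0 ∨ lam = 1 := by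
    rcases mul_eq_zero.mp (by linear_combination hlam2 : lam * (lam - 1) = 0) with h | h
    · exact Or.inl h
    · exact Or.inr (by linear_combination h)
  rcases hl01 with h0 | h1
  · -- e = 0, so I = ⊥
    have he0 : e = 0 := by rw [← hlam, h0, map_zero]
    left
    refine SetLike.ext fun x => ⟨fun hx => ?_, fun hx => ?_⟩
    · have : x = x * e + x * f := by rw [← mul_add, hef, mul_one]
      rw [(TwoSidedIdeal.mem_bot _), this, he0, mul_zero, zero_add]
      exact hSW x ((hmemS _).mpr hx) f hf
    · rw [(TwoSidedIdeal.mem_bot _)] at hx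
      rw [hx]; exact I.zero_mem
  · -- e = 1, so W = ⊥ and I = ⊤
    have he1 : e = 1 := by rw [← hlam, h1, map_one]
    have hW0 : W = ⊥ := by
      rw [Submodule.eq_bot_iff]
      intro w hw
      have := hWS w hw e he
      rwa [he1, mul_one] at this
    have hS : S = ⊤ := by
      apply Submodule.eq_top_of_finrank_eq
      rw [hW0, finrank_bot, add_zero] at hdim
      exact hdim
    right
    refine SetLike.ext fun x => ⟨fun _ => TwoSidedIdeal.mem_top _, fun _ => ?_⟩
    exact (hmemS x).mp (hS ▸ Submodule.mem_top (x := x))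
end

section
/- Let k be a field and m ≥ 1 a natural number. On the matrix algebra A = M_m(k) of m × m matrices over k, the canonical bilinear form g_can(a, b) := tr(L_a ∘ L_b) — the trace being that of a k-linear endomorphism of the m²-dimensional vector space A, with L_a left multiplication by the matrix a — is nondegenerate if and only if (m : k) ≠ 0, i.e. if and only if the characteristic of k does not divide m. -/
lemma repr_stdBasis (k : Type*) [Field k] (m : ℕ) (M : Matrix (Fin m) (Fin m) k) (i j : Fin m) :
    (Matrix.stdBasis k (Fin m) (Fin m)).repr M (i, j) = M i j := by
  simp [Matrix.stdBasis, Matrix.ofLinearEquiv]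

lemma trace_mulLeft (k : Type*) [Field k] (m : ℕ) (c : Matrix (Fin m) (Fin m) k) :
    LinearMap.trace k _ (LinearMap.mulLeft k c) = m * Matrix.trace c := by
  rw [LinearMap.trace_eq_matrix_trace k (Matrix.stdBasis k (Fin m) (Fin m))]
  rw [Matrix.trace]
  have : ∀ p : Fin m × Fin m,
      (LinearMap.toMatrix (Matrix.stdBasis k (Fin m) (Fin m)) (Matrix.stdBasis k (Fin m) (Fin m))
        (LinearMap.mulLeft k c)).diag p = c p.1 p.1 := by
    rintro ⟨i, j⟩
    rw [Matrix.diag_apply, LinearMap.toMatrix_apply, repr_stdBasis,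
      Matrix.stdBasis_eq_single, LinearMap.mulLeft_apply,
      Matrix.mul_apply]
    simp [Matrix.single]
  rw [Finset.sum_congr rfl fun p _ => this p]
  rw [← Finset.univ_product_univ, Finset.sum_product]
  simp [Matrix.trace, Finset.mul_sum, mul_comm]

/-- The canonical bilinear form `g_can(a,b) = tr(L_a ∘ L_b)` on the matrix
algebra `M_m(k)` is nondegenerate if and only if `(m : k) ≠ 0`, i.e. iff the characteristic of
`k` does not divide `m`. -/
theorem statement8 (k : Type*) [Field k] (m : ℕ) (hm : 1 ≤ m) :
    (∀ a : Matrix (Fin m) (Fin m) k, (∀ b : Matrix (Fin m) (Fin m) k,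
        LinearMap.trace k (Matrix (Fin m) (Fin m) k)
          (LinearMap.mulLeft k a ∘ₗ LinearMap.mulLeft k b) = 0) → a = 0)
      ↔ (m : k) ≠ 0 := by
  have key : ∀ a b : Matrix (Fin m) (Fin m) k,
      LinearMap.trace k (Matrix (Fin m) (Fin m) k)
        (LinearMap.mulLeft k a ∘ₗ LinearMap.mulLeft k b)
      = m * Matrix.trace (a * b) := by
    intro a b
    rw [← LinearMap.mulLeft_mul, trace_mulLeft]
  haveI : Nonempty (Fin m) := ⟨⟨0, hm⟩⟩
  constructor
  · intro h hmk
    have h1 : (1 : Matrix (Fin m) (Fin m) k) = 0 := by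
      apply h
      intro b
      rw [key, hmk, zero_mul]
    exact one_ne_zero h1
  · intro hmk a ha
    have htr : ∀ b, Matrix.trace (a * b) = 0 := by
      intro b
      have := ha b
      rw [key] at this
      exact (mul_eq_zero.mp this).resolve_left hmk
    ext i j
    have := htr (Matrix.single j i 1)
    rw [Matrix.trace] at this
    rw [show a i j = ∑ x : Fin m, ∑ y : Fin m, if j = y ∧ i = x then a x y else 0 by
      rw [Finset.sum_eq_single i, Finset.sum_eq_single j] <;>
        simp +contextual [eq_comm]]
    simpa [Matrix.diag, Matrix.mul_apply, Matrix.single] using this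
end

section
/- Let k be a field and h, t ∈ k. In the commutative Frobenius algebra C_{h,t} = k[x]/(x² − h·x − t): the window element equals μ(Δ(1)) = 2x − h; it satisfies (2x − h)² = (h² + 4t)·1; and the canonical bilinear form g_can(u, v) := tr(L_u ∘ L_v) on C_{h,t} is nondegenerate if and only if h² + 4t ≠ 0. -/
open TensorProduct Polynomial

/-- The algebra `C_{h,t} = k[x]/(x² - h·x - t)`. -/
noncomputable abbrev Cht (k : Type*) [Field k] (h t : k) : Type _ :=
  AdjoinRoot (X ^ 2 - C h * X - C t : k[X])

/-- The class of `x` in `C_{h,t}`. -/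
noncomputable abbrev Cht.x (k : Type*) [Field k] (h t : k) : Cht k h t :=
  AdjoinRoot.root _

section Aux

variable (k : Type*) [Field k] (h t : k)

lemma Cht.fdeg : (X ^ 2 - C h * X - C t : k[X]).natDegree = 2 := by compute_degree!

lemma Cht.fne : (X ^ 2 - C h * X - C t : k[X]) ≠ 0 := by
  intro hf
  have h2 := Cht.fdeg k h t
  rw [hf, natDegree_zero] at h2
  exact two_ne_zero h2.symm

noncomputable def Cht.B : Module.Basis (Fin 2) k (Cht k h t) :=
  ((AdjoinRoot.powerBasis (Cht.fne k h t)).basis).reindex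
    (finCongr (by rw [AdjoinRoot.powerBasis_dim, Cht.fdeg]))

lemma Cht.B0 : Cht.B k h t 0 = 1 := by
  rw [Cht.B, Module.Basis.reindex_apply, PowerBasis.basis_eq_pow]
  norm_num

lemma Cht.B1 : Cht.B k h t 1 = Cht.x k h t := by
  rw [Cht.B, Module.Basis.reindex_apply, PowerBasis.basis_eq_pow, AdjoinRoot.powerBasis_gen]
  norm_num [Cht.x]

lemma Cht.xsq : Cht.x k h t ^ 2 = h • Cht.x k h t + algebraMap k _ t := by
  have h0 : (AdjoinRoot.mk _ (X ^ 2 - C h * X - C t : k[X]) : Cht k h t) = 0 := by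
    simp [AdjoinRoot.mk_self]
  rw [map_sub, map_sub, map_pow, map_mul, AdjoinRoot.mk_X, AdjoinRoot.mk_C,
    AdjoinRoot.mk_C] at h0
  rw [Algebra.smul_def, AdjoinRoot.algebraMap_eq]
  linear_combination h0

noncomputable def Cht.Tr : Cht k h t → k := fun u =>
  LinearMap.trace k (Cht k h t) (LinearMap.mulLeft k u)

lemma Cht.Tr_mat (u : Cht k h t) :
    Cht.Tr k h t u = (Cht.B k h t).repr (u * Cht.B k h t 0) 0
      + (Cht.B k h t).repr (u * Cht.B k h t 1) 1 := by
  rw [Cht.Tr, LinearMap.trace_eq_matrix_trace k (Cht.B k h t), Matrix.trace, Fin.sum_univ_two]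
  simp [Matrix.diag, LinearMap.toMatrix_apply]

lemma Cht.Tr_one : Cht.Tr k h t 1 = 2 := by
  have : Module.Finite k (Cht k h t) := Module.Finite.of_basis (Cht.B k h t)
  rw [Cht.Tr, LinearMap.mulLeft_one, LinearMap.trace_id,
    Module.finrank_eq_card_basis (Cht.B k h t)]
  norm_num

lemma Cht.Tr_x : Cht.Tr k h t (Cht.x k h t) = h := by
  rw [Cht.Tr_mat]
  have e0 : Cht.x k h t * Cht.B k h t 0 = Cht.B k h t 1 := by rw [Cht.B0, Cht.B1, mul_one]
  have e1 : Cht.x k h t * Cht.B k h t 1 = h • Cht.B k h t 1 + t • Cht.B k h t 0 := by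
    rw [Cht.B0, Cht.B1, ← sq, Cht.xsq, Algebra.algebraMap_eq_smul_one]
  rw [e0, e1, map_add, map_smul, map_smul, Module.Basis.repr_self, Module.Basis.repr_self]
  simp

lemma Cht.Tr_smul (c : k) (u : Cht k h t) : Cht.Tr k h t (c • u) = c * Cht.Tr k h t u := by
  simp only [Cht.Tr_mat, smul_mul_assoc, map_smul]
  simp [mul_add]

lemma Cht.Tr_add (u v : Cht k h t) :
    Cht.Tr k h t (u + v) = Cht.Tr k h t u + Cht.Tr k h t v := by
  simp only [Cht.Tr_mat, add_mul, map_add]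
  ring_nf
  simp [Finsupp.add_apply]
  ring

lemma Cht.Tr_comp (u v : Cht k h t) :
    LinearMap.trace k (Cht k h t) (LinearMap.mulLeft k u ∘ₗ LinearMap.mulLeft k v)
      = Cht.Tr k h t (u * v) := by
  rw [Cht.Tr, LinearMap.mulLeft_mul]

lemma Cht.decomp (u : Cht k h t) :
    u = (Cht.B k h t).repr u 0 • (1 : Cht k h t)
      + (Cht.B k h t).repr u 1 • Cht.x k h t := by
  conv_lhs => rw [← (Cht.B k h t).sum_repr u]
  rw [Fin.sum_univ_two, Cht.B0, Cht.B1]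

lemma Cht.repr_comb (a b : k) :
    (Cht.B k h t).repr (a • (1:Cht k h t) + b • Cht.x k h t) 0 = a ∧
    (Cht.B k h t).repr (a • (1:Cht k h t) + b • Cht.x k h t) 1 = b := by
  rw [← Cht.B0, ← Cht.B1, map_add, map_smul, map_smul, Module.Basis.repr_self, Module.Basis.repr_self]
  constructor <;> simp

lemma Cht.Tr_comb (a b : k) :
    Cht.Tr k h t (a • (1:Cht k h t) + b • Cht.x k h t) = a * 2 + b * h := by
  rw [Cht.Tr_add, Cht.Tr_smul, Cht.Tr_smul, Cht.Tr_one, Cht.Tr_x]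

lemma Cht.Tr_u (u : Cht k h t) :
    Cht.Tr k h t u = (Cht.B k h t).repr u 0 * 2 + (Cht.B k h t).repr u 1 * h := by
  conv_lhs => rw [Cht.decomp k h t u]
  exact Cht.Tr_comb k h t _ _

lemma Cht.Tr_ux (u : Cht k h t) :
    Cht.Tr k h t (u * Cht.x k h t)
      = (Cht.B k h t).repr u 0 * h + (Cht.B k h t).repr u 1 * (h * h + 2 * t) := by
  conv_lhs => rw [Cht.decomp k h t u]
  rw [add_mul, smul_mul_assoc, smul_mul_assoc, one_mul, ← sq, Cht.xsq,
    Algebra.algebraMap_eq_smul_one]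
  rw [Cht.Tr_add, Cht.Tr_smul, Cht.Tr_smul, Cht.Tr_x, Cht.Tr_add, Cht.Tr_smul, Cht.Tr_smul,
    Cht.Tr_x, Cht.Tr_one]
  ring

lemma Cht.allv (u : Cht k h t) (h1 : Cht.Tr k h t u = 0)
    (h2 : Cht.Tr k h t (u * Cht.x k h t) = 0) (v : Cht k h t) :
    Cht.Tr k h t (u * v) = 0 := by
  conv_lhs => rw [Cht.decomp k h t v]
  rw [mul_add, mul_smul_comm, mul_smul_comm, mul_one, Cht.Tr_add, Cht.Tr_smul, Cht.Tr_smul,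
    h1, h2]
  ring

end Aux

/-- In the Frobenius algebra `C_{h,t}` the window element `μ(Δ(1))` equals
`2x - h`, it squares to `(h² + 4t)·1`, and the canonical bilinear form `g_can(u,v) = tr(L_u∘L_v)`
is nondegenerate iff `h² + 4t ≠ 0`. -/
theorem statement10 (k : Type*) [Field k] (h t : k)
    (Δ : Cht k h t →ₗ[k] Cht k h t ⊗[k] Cht k h t)
    (hΔ1 : Δ 1 = 1 ⊗ₜ Cht.x k h t + Cht.x k h t ⊗ₜ 1 - h • ((1 : Cht k h t) ⊗ₜ (1 : Cht k h t)))
    (hΔx : Δ (Cht.x k h t) = Cht.x k h t ⊗ₜ Cht.x k h t + t • ((1 : Cht k h t) ⊗ₜ (1 : Cht k h t))) :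
    LinearMap.mul' k (Cht k h t) (Δ 1) = 2 * Cht.x k h t - algebraMap k (Cht k h t) h ∧
    (2 * Cht.x k h t - algebraMap k (Cht k h t) h) ^ 2 = algebraMap k (Cht k h t) (h ^ 2 + 4 * t) ∧
    ((∀ u : Cht k h t, (∀ v : Cht k h t,
        LinearMap.trace k (Cht k h t)
          (LinearMap.mulLeft k u ∘ₗ LinearMap.mulLeft k v) = 0) → u = 0)
      ↔ h ^ 2 + 4 * t ≠ 0) := by
  have hx : Cht.x k h t ^ 2 = algebraMap k (Cht k h t) h * Cht.x k h t
      + algebraMap k (Cht k h t) t := by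
    rw [Cht.xsq, Algebra.smul_def]
  refine ⟨?_, ?_, ?_⟩
  · rw [hΔ1, map_sub, map_add, map_smul, LinearMap.mul'_apply, LinearMap.mul'_apply,
      LinearMap.mul'_apply, one_mul, mul_one, mul_one, two_mul, Algebra.smul_def, mul_one]
  · have h4 : algebraMap k (Cht k h t) 4 = 4 := by
      rw [map_ofNat]
    rw [map_add, map_mul, map_pow, h4]
    linear_combination (4 : Cht k h t) * hx
  · constructor
    · intro nd
      by_contra h0
      by_cases hc : (2:k) = 0 ∧ h = 0
      · have hu : ∀ v : Cht k h t, LinearMap.trace k (Cht k h t)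
            (LinearMap.mulLeft k (Cht.x k h t) ∘ₗ LinearMap.mulLeft k v) = 0 := by
          intro v
          rw [Cht.Tr_comp]
          refine Cht.allv k h t _ ?_ ?_ v
          · rw [Cht.Tr_x, hc.2]
          · rw [← sq, Cht.xsq, hc.2, zero_smul, zero_add, Algebra.algebraMap_eq_smul_one,
              Cht.Tr_smul, Cht.Tr_one, hc.1]
            ring
        have hx0 := nd _ hu
        have h1 : ((Cht.B k h t).repr (Cht.x k h t)) 1 = 1 := by
          rw [← Cht.B1, Module.Basis.repr_self, Finsupp.single_eq_same]
        rw [hx0] at h1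
        simp at h1
      · set u : Cht k h t := (-h) • (1:Cht k h t) + (2:k) • Cht.x k h t with hu_def
        obtain ⟨hr0, hr1⟩ := Cht.repr_comb k h t (-h) (2:k)
        have h1 : Cht.Tr k h t u = 0 := by
          rw [hu_def, Cht.Tr_comb]; ring
        have h2 : Cht.Tr k h t (u * Cht.x k h t) = 0 := by
          rw [Cht.Tr_ux, hr0, hr1]
          linear_combination h0
        have hu : ∀ v : Cht k h t, LinearMap.trace k (Cht k h t)
            (LinearMap.mulLeft k u ∘ₗ LinearMap.mulLeft k v) = 0 := by
          intro v
          rw [Cht.Tr_comp]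
          exact Cht.allv k h t u h1 h2 v
        have hu0 := nd _ hu
        rw [← hu_def] at hr0 hr1
        rw [hu0] at hr0 hr1
        simp only [map_zero, Finsupp.coe_zero, Pi.zero_apply] at hr0 hr1
        exact hc ⟨hr1.symm, by linear_combination hr0⟩
    · intro hne u hu
      have e1 : Cht.Tr k h t u = 0 := by
        have := hu 1
        rw [Cht.Tr_comp, mul_one] at this
        exact this
      have e2 : Cht.Tr k h t (u * Cht.x k h t) = 0 := by
        have := hu (Cht.x k h t)
        rw [Cht.Tr_comp] at this
        exact this
      rw [Cht.Tr_u] at e1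
      rw [Cht.Tr_ux] at e2
      set a := (Cht.B k h t).repr u 0
      set b := (Cht.B k h t).repr u 1
      have ha : a = 0 := by
        have : a * (h ^ 2 + 4 * t) = 0 := by linear_combination (h*h + 2*t) * e1 - h * e2
        exact (mul_eq_zero.mp this).resolve_right hne
      have hb : b = 0 := by
        have : b * (h ^ 2 + 4 * t) = 0 := by linear_combination (-h) * e1 + 2 * e2
        exact (mul_eq_zero.mp this).resolve_right hne
      rw [Cht.decomp k h t u, show ((Cht.B k h t).repr u) 0 = 0 from ha,
        show ((Cht.B k h t).repr u) 1 = 0 from hb, zero_smul, zero_smul, add_zero]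
end

section
/- Let k be a field and h, t ∈ k. The commutative Frobenius algebra C_{h,t} satisfies Bar-Natan's conditions: (S) ε(1) = 0; (T) ε(μ(Δ(1))) = 2; and (4Tu) for all u, v ∈ C_{h,t}, ε(u)ε(v)·Δ(1) + ε(u·v)·(1 ⊗ 1) − ε(u)·(1 ⊗ v) − ε(v)·(u ⊗ 1) = 0 in C_{h,t} ⊗ C_{h,t}. -/
open TensorProduct Polynomial

theorem cht_repr (k : Type*) [Field k] (h t : k) (u : Cht k h t) :
    ∃ a b : k, u = a • 1 + b • Cht.x k h t := by
  have hg : (X ^ 2 - C h * X - C t : k[X]).Monic := by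
    have he : (X ^ 2 - C h * X - C t : k[X]) = X ^ (1 + 1) - (C h * X + C t) := by ring
    rw [he]
    have hle : (C h * X + C t : k[X]).degree ≤ 1 := by compute_degree
    exact Polynomial.monic_X_pow_sub (lt_of_le_of_lt hle (by norm_num))
  have hd : (X ^ 2 - C h * X - C t : k[X]).natDegree = 2 := by compute_degree!
  have hspan := (AdjoinRoot.powerBasis' hg).basis.span_eq
  have hu : u ∈ Submodule.span k (Set.range (AdjoinRoot.powerBasis' hg).basis) :=
    hspan ▸ Submodule.mem_top
  have hsub : Set.range ⇑(AdjoinRoot.powerBasis' hg).basis ⊆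
      {1, AdjoinRoot.root (X ^ 2 - C h * X - C t : k[X])} := by
    rintro _ ⟨i, rfl⟩
    have h1 := (AdjoinRoot.powerBasis' hg).basis_eq_pow i
    have h2 : (AdjoinRoot.powerBasis' hg).gen = AdjoinRoot.root _ :=
      AdjoinRoot.powerBasis'_gen hg
    have hdim : (AdjoinRoot.powerBasis' hg).dim = 2 := by
      rw [AdjoinRoot.powerBasis'_dim, hd]
    have h3 : (i : ℕ) < 2 := by have := i.2; omega
    interval_cases hi : (i : ℕ)
    · exact Or.inl (by rw [h1, pow_zero])
    · exact Or.inr (by rw [h1, pow_one, h2]; exact rfl)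
  have hu2 := Submodule.span_mono hsub hu
  rw [Submodule.mem_span_pair] at hu2
  obtain ⟨a, b, hab⟩ := hu2
  exact ⟨a, b, hab.symm⟩

theorem cht_x_sq (k : Type*) [Field k] (h t : k) :
    Cht.x k h t * Cht.x k h t = h • Cht.x k h t + t • (1 : Cht k h t) := by
  have h0 : (AdjoinRoot.root (X ^ 2 - C h * X - C t : k[X])) ^ 2
      - algebraMap k _ h * AdjoinRoot.root _ - algebraMap k _ t = 0 := by
    have := AdjoinRoot.eval₂_root (X ^ 2 - C h * X - C t : k[X])
    simpa [AdjoinRoot.algebraMap_eq] using this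
  simp only [Algebra.smul_def, mul_one]
  show AdjoinRoot.root _ * AdjoinRoot.root _ = _
  linear_combination (h0 : _)

/-- The commutative Frobenius algebra `C_{h,t}` satisfies Bar-Natan's
conditions: the sphere `ε(1) = 0`, the torus `ε(μ(Δ(1))) = 2`, and the four-tube relation. -/
theorem statement11 (k : Type*) [Field k] (h t : k)
    (Δ : Cht k h t →ₗ[k] Cht k h t ⊗[k] Cht k h t)
    (ε : Cht k h t →ₗ[k] k)
    (hΔ1 : Δ 1 = 1 ⊗ₜ Cht.x k h t + Cht.x k h t ⊗ₜ 1 - h • ((1 : Cht k h t) ⊗ₜ (1 : Cht k h t)))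
    (hΔx : Δ (Cht.x k h t) = Cht.x k h t ⊗ₜ Cht.x k h t + t • ((1 : Cht k h t) ⊗ₜ (1 : Cht k h t)))
    (hε1 : ε 1 = 0) (hεx : ε (Cht.x k h t) = 1) :
    ε 1 = 0 ∧
    ε (LinearMap.mul' k (Cht k h t) (Δ 1)) = 2 ∧
    ∀ u v : Cht k h t,
      (ε u * ε v) • Δ 1 + ε (u * v) • ((1 : Cht k h t) ⊗ₜ[k] (1 : Cht k h t))
        - ε u • ((1 : Cht k h t) ⊗ₜ[k] v) - ε v • (u ⊗ₜ[k] (1 : Cht k h t)) = 0 := by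
  refine ⟨hε1, ?_, ?_⟩
  · rw [hΔ1]
    simp [map_add, map_sub, map_smul, LinearMap.mul'_apply, hε1, hεx]
    norm_num
  · intro u v
    obtain ⟨a, b, hu⟩ := cht_repr k h t u
    obtain ⟨c, d, hv⟩ := cht_repr k h t v
    subst hu hv
    have hεu : ε (a • 1 + b • Cht.x k h t) = b := by
      simp [map_add, map_smul, hε1, hεx]
    have hεv : ε (c • 1 + d • Cht.x k h t) = d := by
      simp [map_add, map_smul, hε1, hεx]
    have hprod : (a • 1 + b • Cht.x k h t) * (c • 1 + d • Cht.x k h t)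
        = (a * c + b * d * t) • (1 : Cht k h t) + (a * d + b * c + b * d * h) • Cht.x k h t := by
      have hx2 := cht_x_sq k h t
      simp only [Algebra.smul_def, map_add, map_mul, mul_one] at hx2 ⊢
      linear_combination (algebraMap k (Cht k h t) b * algebraMap k (Cht k h t) d) * hx2
    have hεuv : ε ((a • 1 + b • Cht.x k h t) * (c • 1 + d • Cht.x k h t))
        = a * d + b * c + b * d * h := by
      rw [hprod]
      simp [map_add, map_smul, hε1, hεx]
    rw [hΔ1, hεu, hεv, hεuv]
    simp only [TensorProduct.tmul_add, TensorProduct.add_tmul, TensorProduct.tmul_smul,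
      smul_add, smul_sub, smul_smul, ← TensorProduct.smul_tmul']
    module
end

section
/- Let k be a field and h, t ∈ k with h² + 4t = 0, and suppose there exist α, β ∈ k with α + β = h and α·β = −t (so that the polynomial x² − h·x − t is reducible and C_{h,t} is not a field). Then there exists no unital associative k-algebra A whose canonical bilinear form g_can(a, b) := tr(L_a ∘ L_b) is nondegenerate and whose centre Z(A) is isomorphic as a k-algebra to k[x]/(x² − h·x − t). -/
open Polynomial

universe u

/-- If `h² + 4t = 0` and `x² - h·x - t` is reducible (with roots `α, β`), then
there is no strongly separable `k`-algebra whose centre is isomorphic to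
`C_{h,t} = k[x]/(x² - h·x - t)`. -/
theorem statement12 (k : Type*) [Field k] (h t : k)
    (hdisc : h ^ 2 + 4 * t = 0)
    (α β : k) (hsum : α + β = h) (hprod : α * β = -t) :
    ¬ ∃ (A : Type u) (_ : Ring A) (_ : Algebra k A),
        (∀ a : A, (∀ b : A,
            LinearMap.trace k A (LinearMap.mulLeft k a ∘ₗ LinearMap.mulLeft k b) = 0) → a = 0) ∧
        Nonempty (Subalgebra.center k A ≃ₐ[k] AdjoinRoot (X ^ 2 - C h * X - C t : k[X])) := by
  rintro ⟨A, _, _, hnd, ⟨e⟩⟩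
  -- the discriminant condition forces α = β
  have hαβ : α = β := by
    have h2 : (α - β) ^ 2 = 0 := by
      have : (α - β) ^ 2 = (α + β) ^ 2 - 4 * (α * β) := by ring
      rw [this, hsum, hprod]; linear_combination hdisc
    have := pow_eq_zero_iff (n := 2) (by norm_num) |>.mp h2
    linear_combination this
  set f : k[X] := X ^ 2 - C h * X - C t with hf
  have hh : h = 2 * α := by rw [← hsum, hαβ]; ring
  have ht : t = -(α ^ 2) := by
    rw [← hαβ] at hprod
    have h3 : α ^ 2 = -t := by rw [← hprod]; ring
    linear_combination h3
  have hfe : f = (X - C α) ^ 2 := by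
    rw [hf, hh, ht]
    simp only [map_mul, map_neg, map_pow, map_ofNat]
    ring
  have hfmonic : f.Monic := by rw [hfe]; exact (monic_X_sub_C α).pow 2
  have hdeg : f.degree = 2 := by
    rw [hfe, degree_pow, degree_X_sub_C]; rfl
  -- the nilpotent element of the adjoin-root algebra
  set n : AdjoinRoot f := AdjoinRoot.mk f (X - C α) with hn
  have hn0 : n ≠ 0 := by
    refine AdjoinRoot.mk_ne_zero_of_degree_lt hfmonic (X_sub_C_ne_zero α) ?_
    rw [degree_X_sub_C, hdeg]; decide
  have hn2 : n ^ 2 = 0 := by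
    rw [hn, ← map_pow, ← hfe, AdjoinRoot.mk_self]
  -- pull it back to the centre of A
  set z' : Subalgebra.center k A := e.symm n with hz'
  set z : A := (z' : A) with hz
  have hz0 : z ≠ 0 := by
    intro h0
    have : z' = 0 := Subtype.ext h0
    apply hn0
    apply e.symm.injective
    rw [← hz', this, map_zero]
  have hzsq : z * z = 0 := by
    have : z' * z' = 0 := by
      rw [hz', ← map_mul, ← pow_two, hn2, map_zero]
    calc z * z = ((z' * z' : Subalgebra.center k A) : A) := by push_cast; rfl
    _ = 0 := by rw [this]; rfl
  have hzc : ∀ b : A, b * z = z * b := fun b =>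
    Subalgebra.mem_center_iff.mp z'.2 b
  -- z violates nondegeneracy
  apply hz0
  apply hnd z
  intro b
  by_cases hfin : ∃ s : Finset A, Nonempty (Module.Basis s k A)
  swap
  · rw [LinearMap.trace, dif_neg hfin]; rfl
  obtain ⟨s, ⟨bas⟩⟩ := hfin
  haveI : Module.Finite k A := Module.Finite.of_basis bas
  haveI : Module.Free k A := Module.Free.of_basis bas
  rw [← LinearMap.mulLeft_mul]
  have hnil : IsNilpotent (LinearMap.mulLeft k (z * b)) := by
    refine ⟨2, ?_⟩
    rw [LinearMap.pow_mulLeft]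
    have hzb : (z * b) ^ 2 = 0 := by
      have h1 : (z * b) * (z * b) = z * (z * (b * b)) := by
        rw [mul_assoc z b (z * b), ← mul_assoc b z b, hzc b, mul_assoc z b b]
      rw [pow_two, h1, ← mul_assoc, hzsq, zero_mul]
    rw [hzb, LinearMap.mulLeft_zero_eq_zero]
  exact (LinearMap.isNilpotent_trace_of_isNilpotent hnil).eq_zero
end

section
/- Let R be a ring and let X, X', Y, Y' be cochain complexes of R-modules indexed by ℤ, and Ψ : X ⟶ Y a morphism of complexes. (i) Suppose F : X' ⟶ X and G : X ⟶ X' are morphisms of complexes with G ∘ F = id_{X'} and there is a homotopy h (with components hⁿ : Xⁿ → Xⁿ⁻¹) satisfying id_X − F ∘ G = d ∘ h + h ∘ d and h ∘ F = 0 (so G is a strong deformation retract with inclusion F). Then the mapping cones Γ(Ψ) and Γ(Ψ ∘ F) are homotopy equivalent. (ii) Suppose G' : Y ⟶ Y' and F' : Y' ⟶ Y are morphisms of complexes with G' ∘ F' = id_{Y'} and there is a homotopy h' satisfying id_Y − F' ∘ G' = d ∘ h' + h' ∘ d and G' ∘ h' = 0. Then the mapping cones Γ(Ψ) and Γ(G'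 ∘ Ψ) are homotopy equivalent. -/
open CategoryTheory

/-- The mapping cone construction is invariant, up to homotopy equivalence,
under precomposition with the inclusion of a strong deformation retract and under
postcomposition with a strong deformation retract. -/
theorem statement16 (R : Type*) [Ring R]
    (X X' Y Y' : CochainComplex (ModuleCat R) ℤ) (Ψ : X ⟶ Y) :
    -- (i) precomposition with the inclusion `F` of a strong deformation retract `G`
    ((∀ (F : X' ⟶ X) (G : X ⟶ X') (h : Homotopy (𝟙 X) (G ≫ F)),
        F ≫ G = 𝟙 X' →
        (∀ n : ℤ, F.f n ≫ h.hom n (n - 1) = 0) →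
        Nonempty (HomotopyEquiv (CochainComplex.mappingCone Ψ)
          (CochainComplex.mappingCone (F ≫ Ψ)))) ∧
    -- (ii) postcomposition with a strong deformation retract `G'`
     (∀ (G' : Y ⟶ Y') (F' : Y' ⟶ Y) (h' : Homotopy (𝟙 Y) (G' ≫ F')),
        F' ≫ G' = 𝟙 Y' →
        (∀ n : ℤ, h'.hom n (n - 1) ≫ G'.f (n - 1) = 0) →
        Nonempty (HomotopyEquiv (CochainComplex.mappingCone Ψ)
          (CochainComplex.mappingCone (Ψ ≫ G'))))) := by
  constructor
  · intro F G h hFG _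
    let e : HomotopyEquiv X' X := ⟨F, G, Homotopy.ofEq hFG, h.symm⟩
    have t := Pretriangulated.isoTriangleOfIso₁₂ _ _
      (HomotopyCategory.mappingCone_triangleh_distinguished (F ≫ Ψ))
      (HomotopyCategory.mappingCone_triangleh_distinguished Ψ)
      (HomotopyCategory.isoOfHomotopyEquiv e) (Iso.refl _)
      (by dsimp [HomotopyCategory.isoOfHomotopyEquiv, e]
          exact (Category.comp_id _).trans ((HomotopyCategory.quotient _ _).map_comp F Ψ))
    exact ⟨HomotopyCategory.homotopyEquivOfIso
      ((CategoryTheory.Pretriangulated.Triangle.π₃.mapIso t).symm)⟩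
  · intro G' F' h' hF'G' _
    let e : HomotopyEquiv Y Y' := ⟨G', F', h'.symm, Homotopy.ofEq hF'G'⟩
    have t := Pretriangulated.isoTriangleOfIso₁₂ _ _
      (HomotopyCategory.mappingCone_triangleh_distinguished Ψ)
      (HomotopyCategory.mappingCone_triangleh_distinguished (Ψ ≫ G'))
      (Iso.refl _) (HomotopyCategory.isoOfHomotopyEquiv e)
      (by dsimp [HomotopyCategory.isoOfHomotopyEquiv, e]
          exact ((HomotopyCategory.quotient _ _).map_comp Ψ G').symm.trans (Category.id_comp _).symm)
    exact ⟨HomotopyCategory.homotopyEquivOfIso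
      (CategoryTheory.Pretriangulated.Triangle.π₃.mapIso t)⟩
end

section
/- Let k be a field and let A be a finite-dimensional unital associative k-algebra with a ℤ-grading A = ⨁_{i∈ℤ} A^i, equipped with k-linear maps Δ_A : A → A ⊗ A and ε_A : A → k making (A, μ_A, η_A, Δ_A, ε_A) a symmetric Frobenius algebra. Let C = C_{0,0} = k[x]/(x²) be Khovanov's Frobenius algebra (Δ_C(1) = 1 ⊗ x + x ⊗ 1, Δ_C(x) = x ⊗ x, ε_C(1) = 0, ε_C(x) = 1), graded by deg(1) = 2 and deg(x) = −2. Let ι : C → A be a unital k-algebra homomorphism whose image lies in the centre of A, and ι* : A → C a k-linear map, such that the duality condition ε_C(z · ι*(u)) = ε_A(ι(z) · u) holds for all z ∈ C, u ∈ A, and the Cardy condition μ_A ∘ τ_{A,A} ∘ Δ_A = ι ∘ ι* holds. Assume the structure maps are graded of the following degrees: u ∈ A^i and v ∈ A^j imply u·v ∈ A^{i+j−1}; 1_A ∈ A^1; Δ_A(A^i) ⊆ ⊕_{p+q=i−1} A^p ⊗ A^q; ε_A vanishes on A^i for all i ≠ −1; ι(C^i) ⊆ A^{i−1}; and ι*(A^i)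 ⊆ C^{i−1}. Then the window element μ_A(Δ_A(1)) equals 0 (in particular A is not strongly separable), ε_A(1_A) = 0, and (dim_k A : k) = 0; consequently, if A ≠ 0 then k has positive characteristic dividing dim_k A. -/
open TensorProduct

/-- The Euler grading of Khovanov's Frobenius algebra `C_{0,0} = k[x]/(x²)` (realized as the
dual numbers, with `x = ε`): `1` has degree `2` and `x` has degree `-2`. -/
noncomputable def khGrading (k : Type*) [Field k] : ℤ → Submodule k (DualNumber k) :=
  fun i =>
    if i = 2 then Submodule.span k {(1 : DualNumber k)}
    else if i = -2 then Submodule.span k {(DualNumber.eps : DualNumber k)}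
    else ⊥


section Aux

variable {k A : Type*} [Field k] [Ring A] [Algebra k A]

private lemma aux_assoc_mulR (w : A) (T : A ⊗[k] A) :
    TensorProduct.map LinearMap.id (LinearMap.mul' k A)
      ((TensorProduct.assoc k A A A) (T ⊗ₜ w)) =
    TensorProduct.map LinearMap.id (LinearMap.mulRight k w) T := by
  induction T using TensorProduct.induction_on with
  | zero => simp only [zero_tmul, LinearEquiv.map_zero, LinearMap.map_zero]
  | tmul a b => simp
  | add x y hx hy => simp [add_tmul, hx, hy]

private lemma aux_assoc_mulL (x : A) (T : A ⊗[k] A) :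
    TensorProduct.map (LinearMap.mul' k A) LinearMap.id
      ((TensorProduct.assoc k A A A).symm (x ⊗ₜ T)) =
    TensorProduct.map (LinearMap.mulLeft k x) LinearMap.id T := by
  induction T using TensorProduct.induction_on with
  | zero => simp only [tmul_zero, LinearEquiv.map_zero, LinearMap.map_zero]
  | tmul a b => simp
  | add y z hy hz => simp [tmul_add, hy, hz]

private lemma aux_mul'_mapR (u : A) (T : A ⊗[k] A) :
    LinearMap.mul' k A (TensorProduct.map LinearMap.id (LinearMap.mulRight k u) T) =
      LinearMap.mul' k A T * u := by
  induction T using TensorProduct.induction_on with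
  | zero => simp
  | tmul a b => simp [mul_assoc]
  | add y z hy hz => simp [hy, hz, add_mul]

end Aux

/-- **Statement 17.** If an Euler-graded knowledgeable Frobenius algebra extends Khovanov's
Frobenius algebra `C_{0,0}`, then the window element of `A` vanishes (so `A` is not strongly
separable), the disc `ε_A(1)` vanishes, and `dim_k A = 0` in `k`; hence if `A ≠ 0` then `k`
has positive characteristic dividing `dim_k A`. -/
theorem statement17 {k A : Type*} [Field k] [Ring A] [Algebra k A] [FiniteDimensional k A]
    (F : FrobeniusStr k A)
    (hsym : ∀ u v : A, F.ε (u * v) = F.ε (v * u))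
    -- the ℤ-grading of A
    (𝒜 : ℤ → Submodule k A) (hdecomp : DirectSum.IsInternal 𝒜)
    -- deg μ_A = -1
    (hmul : ∀ (i j : ℤ) (u v : A), u ∈ 𝒜 i → v ∈ 𝒜 j → u * v ∈ 𝒜 (i + j - 1))
    -- deg η_A = 1
    (hone : (1 : A) ∈ 𝒜 1)
    -- deg Δ_A = -1
    (hΔ : ∀ (i : ℤ), ∀ u ∈ 𝒜 i, F.Δ u ∈
      ⨆ p : ℤ, LinearMap.range (TensorProduct.mapIncl (𝒜 p) (𝒜 (i - 1 - p))))
    -- deg ε_A = 1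
    (hε : ∀ (i : ℤ), i ≠ -1 → ∀ u ∈ 𝒜 i, F.ε u = 0)
    -- the Frobenius structure of Khovanov's algebra C = C_{0,0} = k[x]/(x²)
    (ΔC : DualNumber k →ₗ[k] DualNumber k ⊗[k] DualNumber k)
    (εC : DualNumber k →ₗ[k] k)
    (hΔC1 : ΔC 1 = 1 ⊗ₜ DualNumber.eps + DualNumber.eps ⊗ₜ 1)
    (hΔCx : ΔC DualNumber.eps = DualNumber.eps ⊗ₜ DualNumber.eps)
    (hεC1 : εC 1 = 0) (hεCx : εC DualNumber.eps = 1)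
    -- ι : C → A, a unital algebra homomorphism with central image
    (ι : DualNumber k →ₐ[k] A)
    (hcentral : ∀ (z : DualNumber k) (u : A), ι z * u = u * ι z)
    -- ι* : A → C
    (ιs : A →ₗ[k] DualNumber k)
    -- deg ι = -1 and deg ι* = -1
    (hι : ∀ (i : ℤ), ∀ z ∈ khGrading k i, ι z ∈ 𝒜 (i - 1))
    (hιs : ∀ (i : ℤ), ∀ u ∈ 𝒜 i, ιs u ∈ khGrading k (i - 1))
    -- duality
    (hdual : ∀ (z : DualNumber k) (u : A), εC (z * ιs u) = F.ε (ι z * u))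
    -- Cardy condition
    (hcardy : ∀ u : A,
      LinearMap.mul' k A ((TensorProduct.comm k A A) (F.Δ u)) = ι (ιs u)) :
    F.window = 0 ∧
    F.ε 1 = 0 ∧
    ((Module.finrank k A : k) = 0) ∧
    (Nontrivial A →
      ¬ (∀ a : A, (∀ b : A,
          LinearMap.trace k A (LinearMap.mulLeft k a ∘ₗ LinearMap.mulLeft k b) = 0) → a = 0) ∧
      0 < ringChar k ∧ (ringChar k : ℕ) ∣ Module.finrank k A) := by
  
  classical
  -- basic consequences of the grading
  have hιs1 : ιs (1 : A) = 0 := by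
    have h := hιs 1 1 hone
    norm_num [khGrading] at h
    exact h
  have hει : ∀ z : DualNumber k, F.ε (ι z) = 0 := by
    intro z
    have h := hdual z 1
    rw [hιs1, mul_zero, map_zero, mul_one] at h
    exact h.symm
  have hτ1 : LinearMap.mul' k A ((TensorProduct.comm k A A) (F.Δ 1)) = 0 := by
    rw [hcardy, hιs1, map_zero]
  -- Δ w = (1 ⊗ R_w)(Δ 1) and Δ x = (L_x ⊗ 1)(Δ 1)
  have hΔR : ∀ w : A,
      TensorProduct.map LinearMap.id (LinearMap.mulRight k w) (F.Δ 1) = F.Δ w := by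
    intro w
    have h := F.frob_right 1 w
    rw [one_mul] at h
    rw [← h, TensorProduct.map_tmul, LinearMap.id_apply, aux_assoc_mulR]
  have hΔL : ∀ x : A,
      TensorProduct.map (LinearMap.mulLeft k x) LinearMap.id (F.Δ 1) = F.Δ x := by
    intro x
    have h := F.frob_left x 1
    rw [mul_one] at h
    rw [← h, TensorProduct.map_tmul, LinearMap.id_apply, aux_assoc_mulL]
  -- ε ∘ μ is symmetric
  have hεμ : ∀ T : A ⊗[k] A,
      F.ε (LinearMap.mul' k A T) = F.ε (LinearMap.mul' k A ((TensorProduct.comm k A A) T)) := by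
    intro T
    induction T using TensorProduct.induction_on with
    | zero => simp
    | tmul a b => simpa using hsym a b
    | add y z hy hz => simp [hy, hz]
  -- ε (window * u) = 0 for all u
  have hμΔ : ∀ u : A, LinearMap.mul' k A (F.Δ u) = F.window * u := by
    intro u
    rw [← hΔR u, aux_mul'_mapR]
    rfl
  have hεwin : ∀ u : A, F.ε (F.window * u) = 0 := by
    intro u
    rw [← hμΔ u, hεμ, hcardy, hει]
  have hεwin' : ∀ u : A, F.ε (u * F.window) = 0 := fun u => (hsym u _).trans (hεwin u)
  -- window = 0
  have hwindow : F.window = 0 := by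
    have hz : (F.ε ∘ₗ LinearMap.mulRight k F.window : A →ₗ[k] k) = 0 := by
      ext u
      simpa using hεwin' u
    have h2 := F.counit_right F.window
    rw [← hΔR F.window] at h2
    have h3 : TensorProduct.map LinearMap.id F.ε
        (TensorProduct.map LinearMap.id (LinearMap.mulRight k F.window) (F.Δ 1)) =
        TensorProduct.map LinearMap.id (F.ε ∘ₗ LinearMap.mulRight k F.window) (F.Δ 1) := by
      rw [← LinearMap.comp_apply, ← TensorProduct.map_comp, LinearMap.id_comp]
    rw [h3, hz] at h2
    have h4 : TensorProduct.map (LinearMap.id : A →ₗ[k] A) (0 : A →ₗ[k] k) (F.Δ 1) = 0 := by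
      induction (F.Δ 1) using TensorProduct.induction_on with
      | zero => simp
      | tmul a b => simp
      | add y z hy hz => simp [hy, hz]
    rw [h4] at h2
    simpa using h2.symm
  -- the pairing map β a = ε (· * a)
  set β : A →ₗ[k] Module.Dual k A :=
    (LinearMap.llcomp k A A k F.ε).comp (LinearMap.mul k A).flip with hβ
  have hβapp : ∀ a x : A, β a x = F.ε (x * a) := fun a x => rfl
  -- dualTensorHom (β ⊗ id) (Δ 1) = id
  have hΦkey : ∀ (x : A) (T : A ⊗[k] A),
      dualTensorHom k A A (TensorProduct.map β LinearMap.id T) x =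
        TensorProduct.lid k A (TensorProduct.map F.ε LinearMap.id
          (TensorProduct.map (LinearMap.mulLeft k x) LinearMap.id T)) := by
    intro x T
    induction T using TensorProduct.induction_on with
    | zero => simp
    | tmul a b => simp [hβapp]
    | add y z hy hz => simp [hy, hz]
  have hΦ : dualTensorHom k A A (TensorProduct.map β LinearMap.id (F.Δ 1)) = LinearMap.id := by
    ext x
    rw [LinearMap.id_apply, hΦkey, hΔL x]
    exact F.counit_left x
  -- trace of left multiplication vanishes
  have hcomp : ∀ (b : A) (T : A ⊗[k] A),
      LinearMap.mulLeft k b ∘ₗ dualTensorHom k A A (TensorProduct.map β LinearMap.id T) =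
        dualTensorHom k A A (TensorProduct.map β (LinearMap.mulLeft k b) T) := by
    intro b T
    induction T using TensorProduct.induction_on with
    | zero => simp
    | tmul a c =>
      ext x
      simp [mul_smul_comm]
    | add y z hy hz => simp [LinearMap.comp_add, hy, hz]
  have hcontract : ∀ (b : A) (T : A ⊗[k] A),
      contractLeft k A (TensorProduct.map β (LinearMap.mulLeft k b) T) =
        F.ε (LinearMap.mul' k A ((TensorProduct.comm k A A) T) * b) := by
    intro b T
    induction T using TensorProduct.induction_on with
    | zero => simp
    | tmul a c =>
      simp only [TensorProduct.map_tmul, contractLeft_apply, TensorProduct.comm_tmul,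
        LinearMap.mul'_apply, LinearMap.mulLeft_apply, hβapp]
      rw [mul_assoc, hsym b (c * a)]
    | add y z hy hz => simp [hy, hz, add_mul]
  have htrace : ∀ b : A, LinearMap.trace k A (LinearMap.mulLeft k b) = 0 := by
    intro b
    have h1 : LinearMap.mulLeft k b =
        dualTensorHom k A A (TensorProduct.map β (LinearMap.mulLeft k b) (F.Δ 1)) := by
      rw [← hcomp b (F.Δ 1), hΦ, LinearMap.comp_id]
    rw [h1, LinearMap.trace_eq_contract_apply, hcontract, hτ1, zero_mul, map_zero]
  have hfin : ((Module.finrank k A : k)) = 0 := by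
    have h := htrace 1
    rw [LinearMap.mulLeft_one, LinearMap.trace_id] at h
    exact h
  refine ⟨hwindow, hε 1 (by norm_num) 1 hone, hfin, ?_⟩
  intro hN
  have hdvd : ringChar k ∣ Module.finrank k A := ((ringChar.spec (R := k) (Module.finrank k A)).mp hfin)
  have hpos : 0 < Module.finrank k A := Module.finrank_pos
  refine ⟨?_, ?_, hdvd⟩
  · intro hcontr
    have h1 := hcontr 1 (fun b => by
      rw [LinearMap.mulLeft_one, LinearMap.id_comp]; exact htrace b)
    exact one_ne_zero h1
  · rcases Nat.eq_zero_or_pos (ringChar k) with h0 | h0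
    · rw [h0, zero_dvd_iff] at hdvd
      omega
    · exact h0
end

section
/- Let k be a field and A a unital associative k-algebra whose canonical bilinear form g_can^A(a, b) := tr(L_a ∘ L_b) is nondegenerate (A strongly separable). Then the centre Z(A) of A, regarded as a commutative k-algebra, is also strongly separable: its canonical bilinear form g_can^{Z(A)}(u, v) := tr(L_u ∘ L_v), with L_u multiplication by u on Z(A), is nondegenerate. -/
open LinearMap TensorProduct

section Aux
variable {k : Type*} [Field k]





lemma mulLeft_tmul {B : Type*} [Ring B] [Algebra k B]
    (F : Type*) [Field F] [Algebra k F] (c : F) (x : B) :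
    LinearMap.mulLeft F ((c ⊗ₜ[k] x) : F ⊗[k] B) = c • (LinearMap.mulLeft k x).baseChange F := by
  apply LinearMap.ext
  intro t
  induction t with
  | zero => simp
  | tmul d u => simp [Algebra.TensorProduct.tmul_mul_tmul, smul_tmul', smul_eq_mul, mul_comm]
  | add u v hu hv => rw [map_add, map_add, hu, hv]


/-- The canonical trace bilinear form of an algebra. -/
noncomputable def traceFormOf (R B : Type*) [CommRing R] [Ring B] [Algebra R B] :
    LinearMap.BilinForm R B :=
  LinearMap.mk₂ R (fun a b => LinearMap.trace R B (mulLeft R a ∘ₗ mulLeft R b))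
    (fun a a' b => by
      have h : mulLeft R (a + a') = mulLeft R a + mulLeft R a' := by ext x; simp [add_mul]
      rw [h, add_comp, map_add])
    (fun c a b => by
      have h : mulLeft R (c • a) = c • mulLeft R a := by ext x; simp [smul_mul_assoc]
      rw [h, smul_comp, map_smul])
    (fun a b b' => by
      have h : mulLeft R (b + b') = mulLeft R b + mulLeft R b' := by ext x; simp [add_mul]
      rw [h, comp_add, map_add])
    (fun c a b => by
      have h : mulLeft R (c • b) = c • mulLeft R b := by ext x; simp [smul_mul_assoc]
      rw [h, comp_smul, map_smul])

@[simp] lemma traceFormOf_apply (R B : Type*) [CommRing R] [Ring B] [Algebra R B] (a b : B) :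
    traceFormOf R B a b = LinearMap.trace R B (mulLeft R a ∘ₗ mulLeft R b) := rfl

lemma nondeg_baseChange {A : Type*} [Ring A] [Algebra k A] [Module.Finite k A]
    {ι : Type*} [Fintype ι] [DecidableEq ι] (b : Module.Basis ι k A)
    (hnd : ∀ a : A, (∀ c : A, trace k A (mulLeft k a ∘ₗ mulLeft k c) = 0) → a = 0)
    (F : Type*) [Field F] [Algebra k F] :
    ∀ t : F ⊗[k] A, (∀ s : F ⊗[k] A,
      trace F (F ⊗[k] A) (mulLeft F t ∘ₗ mulLeft F s) = 0) → t = 0 := by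
  have hB : (traceFormOf k A).Nondegenerate := by
    refine LinearMap.BilinForm.Nondegenerate.ofSeparatingLeft ?_
    intro a ha; exact hnd a (fun c => ha c)
  have hdet := (LinearMap.BilinForm.nondegenerate_iff_det_ne_zero b).mp hB
  have key : LinearMap.BilinForm.toMatrix (b.baseChange F) (traceFormOf F (F ⊗[k] A))
      = (algebraMap k F).mapMatrix (LinearMap.BilinForm.toMatrix b (traceFormOf k A)) := by
    ext i j
    rw [LinearMap.BilinForm.toMatrix_apply, RingHom.mapMatrix_apply, Matrix.map_apply,
      LinearMap.BilinForm.toMatrix_apply]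
    simp only [traceFormOf_apply, Module.Basis.baseChange_apply]
    rw [_root_.mulLeft_tmul, _root_.mulLeft_tmul, one_smul, one_smul, ← LinearMap.baseChange_comp,
      LinearMap.trace_baseChange]
  have hdet' : (LinearMap.BilinForm.toMatrix (b.baseChange F) (traceFormOf F (F ⊗[k] A))).det ≠ 0 := by
    rw [key, ← RingHom.map_det]
    intro h
    exact hdet ((injective_iff_map_eq_zero' (algebraMap k F)).mp (algebraMap k F).injective _ |>.mp h)
  have hB' := (LinearMap.BilinForm.nondegenerate_iff_det_ne_zero (b.baseChange F)).mpr hdet'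
  intro t ht
  exact hB'.1 t (fun s => ht s)



lemma trace_pi_mulLeft (F : Type*) [Field F] {ι : Type*} [Fintype ι] [DecidableEq ι] (v : ι → F) :
    trace F (ι → F) (mulLeft F v) = ∑ i, v i := by
  rw [trace_eq_matrix_trace F (Pi.basisFun F ι)]
  rw [Matrix.trace]
  congr 1
  funext i
  rw [Matrix.diag_apply, LinearMap.toMatrix_apply]
  simp [Pi.basisFun_apply, mulLeft_apply, Pi.single_apply]

lemma endgame (F C : Type*) [Field F] [IsAlgClosed F] [CommRing C] [Algebra F C]
    [Module.Finite F C] [IsReduced C] :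
    ∀ x : C, (∀ w : C, trace F C (mulLeft F x ∘ₗ mulLeft F w) = 0) → x = 0 := by
  classical
  haveI : IsArtinianRing C := isArtinian_of_tower F inferInstance
  haveI := (IsArtinianRing.setOfPred_isMaximal_finite C).to_subtype
  set ι := MaximalSpectrum C with hι
  -- the ring equiv, upgraded to an algebra equiv
  have halg : ∀ c : F, IsArtinianRing.equivPi C (algebraMap F C c)
      = algebraMap F (∀ I : ι, C ⧸ I.asIdeal) c := by
    intro c; funext I; rfl
  let e1 : C ≃ₐ[F] (∀ I : ι, C ⧸ I.asIdeal) :=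
    AlgEquiv.ofRingEquiv (f := (IsArtinianRing.equivPi C : C ≃+* _)) halg
  -- each quotient is isomorphic to F
  have hbij : ∀ I : ι, Function.Bijective (algebraMap F (C ⧸ I.asIdeal)) := by
    intro I
    haveI : I.asIdeal.IsPrime := I.isMaximal.isPrime
    haveI : Module.Finite F (C ⧸ I.asIdeal) :=
      Module.Finite.of_surjective (Ideal.Quotient.mkₐ F I.asIdeal).toLinearMap
        (Ideal.Quotient.mk_surjective)
    haveI : Algebra.IsIntegral F (C ⧸ I.asIdeal) := Algebra.IsIntegral.of_finite F _
    exact ⟨(algebraMap F (C ⧸ I.asIdeal)).injective,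
      IsAlgClosed.algebraMap_bijective_of_isIntegral.2⟩
  let e2 : ∀ I : ι, (C ⧸ I.asIdeal) ≃ₐ[F] F := fun I =>
    (AlgEquiv.ofBijective (Algebra.ofId F (C ⧸ I.asIdeal)) (hbij I)).symm
  let ψ : C ≃ₐ[F] (ι → F) := e1.trans (AlgEquiv.piCongrRight e2)
  haveI : Fintype ι := Fintype.ofFinite _
  -- trace transport
  have htr : ∀ x : C, trace F C (mulLeft F x) = ∑ i, ψ x i := by
    intro x
    rw [← trace_pi_mulLeft]
    rw [← LinearMap.trace_conj' (mulLeft F x) ψ.toLinearEquiv]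
    congr 1
    apply LinearMap.ext; intro y
    simp only [LinearEquiv.conj_apply, LinearMap.comp_apply, mulLeft_apply,
      LinearEquiv.coe_coe, AlgEquiv.toLinearEquiv_apply, AlgEquiv.toLinearEquiv_symm]
    rw [map_mul]
    simp
  intro x hx
  have hψ : ψ x = 0 := by
    funext i
    have h := hx (ψ.symm (Pi.single i 1))
    rw [← LinearMap.mulLeft_mul, htr] at h
    rw [map_mul] at h
    simp only [AlgEquiv.apply_symm_apply] at h
    rw [Finset.sum_eq_single i] at h
    · simpa using h
    · intro j _ hj; simp [Pi.single_apply, hj]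
    · intro hi; exact absurd (Finset.mem_univ i) hi
  have := congrArg ψ.symm hψ
  simpa using this


lemma mulLeft_add' (R B : Type*) [CommSemiring R] [Ring B] [Algebra R B] (a b : B) :
    LinearMap.mulLeft R (a + b) = LinearMap.mulLeft R a + LinearMap.mulLeft R b := by
  ext x; simp [add_mul]

set_option maxHeartbeats 1000000 in
set_option synthInstance.maxHeartbeats 400000 in
lemma center_trace_nondeg (k A : Type*) [Field k] [Ring A] [Algebra k A] [Module.Finite k A]
    (hnd : ∀ a : A, (∀ b : A,
        LinearMap.trace k A (LinearMap.mulLeft k a ∘ₗ LinearMap.mulLeft k b) = 0) → a = 0) :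
    ∀ z : Subalgebra.center k A, (∀ w : Subalgebra.center k A,
        LinearMap.trace k (Subalgebra.center k A)
          (LinearMap.mulLeft k z ∘ₗ LinearMap.mulLeft k w) = 0) → z = 0 := by
  classical
  intro z hz
  haveI : DecidableEq (Module.Free.ChooseBasisIndex k A) := Classical.decEq _
  have hnd' := nondeg_baseChange (Module.Free.chooseBasis k A) hnd (AlgebraicClosure k)
  -- the canonical embedding of F ⊗ Z into F ⊗ A
  let j : AlgebraicClosure k ⊗[k] Subalgebra.center k A →ₐ[AlgebraicClosure k]
      AlgebraicClosure k ⊗[k] A :=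
    Algebra.TensorProduct.map (AlgHom.id (AlgebraicClosure k) (AlgebraicClosure k))
      (Subalgebra.center k A).val
  have hjeq : ∀ t, j t = (Subalgebra.center k A).val.toLinearMap.baseChange
      (AlgebraicClosure k) t := by
    intro t
    induction t with
    | zero => simp
    | tmul c u => simp [j, Algebra.TensorProduct.map_tmul, LinearMap.baseChange_tmul]
    | add u v hu hv => rw [map_add, map_add, hu, hv]
  have hjinj : Function.Injective j := by
    have h1 : Function.Injective ((Subalgebra.center k A).val.toLinearMap.baseChange
        (AlgebraicClosure k)) := by
      rw [LinearMap.baseChange_eq_ltensor]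
      exact Module.Flat.lTensor_preserves_injective_linearMap _ Subtype.val_injective
    intro u v huv
    apply h1
    rw [← hjeq, ← hjeq]
    exact huv
  -- the image of j is central
  have hcent : ∀ (x : AlgebraicClosure k ⊗[k] Subalgebra.center k A)
      (y : AlgebraicClosure k ⊗[k] A), j x * y = y * j x := by
    intro x
    induction x with
    | zero => intro y; simp
    | add u v hu hv => intro y; rw [map_add, add_mul, mul_add, hu, hv]
    | tmul c u =>
      intro y
      induction y with
      | zero => simp
      | add p q hp hq => rw [mul_add, add_mul, hp, hq]
      | tmul d a =>
        simp only [j, Algebra.TensorProduct.map_tmul, AlgHom.coe_id, id_eq,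
          Subalgebra.coe_val, Algebra.TensorProduct.tmul_mul_tmul]
        rw [mul_comm c d, Subalgebra.mem_center_iff.mp u.2 a]
  -- F ⊗ Z is reduced
  haveI : IsReduced (AlgebraicClosure k ⊗[k] Subalgebra.center k A) := by
    constructor
    intro x hx
    apply hjinj
    rw [map_zero]
    apply hnd' (j x)
    intro t
    rw [← LinearMap.mulLeft_mul]
    have hnil : IsNilpotent (j x * t) := by
      obtain ⟨n, hn⟩ := hx.map j
      exact ⟨n, by rw [Commute.mul_pow (hcent x t), hn, zero_mul]⟩
    obtain ⟨m, hm⟩ := hnil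
    have : IsNilpotent (LinearMap.mulLeft (AlgebraicClosure k) (j x * t)) :=
      ⟨m, by rw [LinearMap.pow_mulLeft, hm, LinearMap.mulLeft_zero_eq_zero]⟩
    have := LinearMap.isNilpotent_trace_of_isNilpotent this
    exact this.eq_zero
  -- apply the endgame to F ⊗ Z
  have hend := endgame (AlgebraicClosure k) (AlgebraicClosure k ⊗[k] Subalgebra.center k A)
  have hzero : (1 : AlgebraicClosure k) ⊗ₜ[k] z = 0 := by
    apply hend
    intro w
    rw [← LinearMap.mulLeft_mul]
    induction w with
    | zero => rw [mul_zero, LinearMap.mulLeft_zero_eq_zero, map_zero]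
    | add u v hu hv =>
      rw [mul_add, mulLeft_add', map_add, hu, hv, add_zero]
    | tmul c w =>
      rw [Algebra.TensorProduct.tmul_mul_tmul, one_mul, _root_.mulLeft_tmul, map_smul,
        LinearMap.trace_baseChange, LinearMap.mulLeft_mul, hz w]
      simp
  -- conclude z = 0
  have hrepr := congrArg ((Module.Free.chooseBasis k (Subalgebra.center k A)).baseChange
      (AlgebraicClosure k)).repr hzero
  rw [map_zero] at hrepr
  have : ∀ i, (Module.Free.chooseBasis k (Subalgebra.center k A)).repr z i = 0 := by
    intro i
    have h := congrFun (congrArg DFunLike.coe hrepr) i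
    rw [Module.Basis.baseChange_repr_tmul] at h
    simp only [Finsupp.coe_zero, Pi.zero_apply] at h
    have h2 : algebraMap k (AlgebraicClosure k)
        ((Module.Free.chooseBasis k (Subalgebra.center k A)).repr z i) = 0 := by
      rw [Algebra.algebraMap_eq_smul_one]; exact h
    exact (algebraMap k (AlgebraicClosure k)).injective (by rw [h2, map_zero])
  have hr0 : (Module.Free.chooseBasis k (Subalgebra.center k A)).repr z = 0 :=
    Finsupp.ext this
  exact ((Module.Free.chooseBasis k (Subalgebra.center k A)).repr.map_eq_zero_iff).mp hr0

end Aux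

/-- **Statement 19.** The centre of a strongly separable algebra over a field is strongly
separable: the canonical bilinear form `g_can(u,v) = tr(L_u ∘ L_v)` of the centre is
nondegenerate. -/
theorem statement19 (k A : Type*) [Field k] [Ring A] [Algebra k A]
    (hnd : ∀ a : A, (∀ b : A,
        LinearMap.trace k A (LinearMap.mulLeft k a ∘ₗ LinearMap.mulLeft k b) = 0) → a = 0) :
    ∀ z : Subalgebra.center k A, (∀ w : Subalgebra.center k A,
        LinearMap.trace k (Subalgebra.center k A)
          (LinearMap.mulLeft k z ∘ₗ LinearMap.mulLeft k w) = 0) → z = 0 := by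
  classical
  by_cases hfin : ∃ s : Finset A, Nonempty (Module.Basis s k A)
  · obtain ⟨s, ⟨b⟩⟩ := hfin
    haveI : Module.Finite k A := Module.Finite.of_basis b
    exact center_trace_nondeg k A hnd
  · intro z _
    have h0 : LinearMap.trace k A = 0 := by delta LinearMap.trace; exact dif_neg hfin
    exact Subtype.ext (hnd z (fun b => by rw [h0]; rfl))
end
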